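/- arXiv:2105.12388 — 6 statements merged into one kernel-verified Lean document; each statement's English description precedes it below -/
import Mathlib

section
/- Under the standing assumptions, suppose the family L_{δ,μ} satisfies: (Exi1) there is M₁ ≥ 0 such that every f ∈ P_w that is a fixed point of L_{δ,μ₁} for some μ₁ ∈ P_w satisfies ‖f‖_s ≤ M₁; (Exi2) there is K₁ ≥ 0 such that ‖L_{δ,μ₁} − L_{δ,μ₂}‖_{B_s→B_w} ≤ δ K₁ ‖μ₁ − μ₂‖_w for all μ₁, μ₂ ∈ P_w. Suppose P_w contains a probability measure μ₀ with ‖μ₀‖_w ≤ M₁, and that there is δ̄ ≥ 0 such that for each 0 ≤ δ < δ̄ and each μ ∈ P_w with ‖μ‖_w ≤ M₁ the operator L_{δ,μ} has a unique fixed probability measure f_μ in P_w, and assume: (Exi3) there is K₂ ≥ 1 such that ‖f_{μ₁} − f_{μ₂}‖_w ≤ δ K₂ ‖μ₁ − μ₂‖_w for all μ₁, μ₂ ∈ P_w with max(‖μ₁‖_w, ‖μ₂‖_w) ≤ M₁. Then for each 0 ≤ δ < min(δ̄, 1/K₂) there is a unique μ ∈ P_w with 𝓛_δ(μ) = μ;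 moreover μ = lim_{k→∞} μ_k in ‖·‖_w, where μ₀ is any probability measure in P_w with ‖μ₀‖_w ≤ M₁ and, inductively, μ_k is the unique fixed probability measure of L_{δ,μ_{k−1}} in P_w. -/
/-!
The fixed point `μ` of `𝓛_δ` is found by Banach's theorem on the `‖·‖_w`-ball of radius `M₁` in
`P_w`, which is complete and, by (Exi1), contains every fixed probability measure of every `L_{δ,μ}`.
On that ball the map `μ ↦ f_μ` is a contraction by (Exi3) since `δ K₂ < 1`; the same Lipschitz bound
forces each step `μ_{k+1}` of the scheme to be `f_{μ_k}`, so the scheme is the Picard iteration.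
-/

open MeasureTheory Filter Topology

section NormOn

variable {E : Type*} [AddCommGroup E] [Module ℝ E] {B : Submodule ℝ E} {n : E → ℝ}

structure IsNormOn (B : Submodule ℝ E) (n : E → ℝ) : Prop where
  add_le : ∀ x ∈ B, ∀ y ∈ B, n (x + y) ≤ n x + n y
  smul_eq : ∀ (c : ℝ), ∀ x ∈ B, n (c • x) = |c| * n x
  eq_zero : ∀ x ∈ B, n x = 0 → x = 0

theorem IsNormOn.map_zero (hn : IsNormOn B n) : n 0 = 0 := by
  simpa using hn.smul_eq 0 0 B.zero_mem

theorem IsNormOn.map_sub_comm (hn : IsNormOn B n) {x y : E} (hx : x ∈ B) (hy : y ∈ B) :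
    n (x - y) = n (y - x) := by
  simpa using (hn.smul_eq (-1) (x - y) (B.sub_mem hx hy)).symm

abbrev IsNormOn.metricSpace (hn : IsNormOn B n) (S : Set E) (hSB : S ⊆ B) : MetricSpace S where
  dist x y := n (x - y)
  dist_self x := by simp [hn.map_zero]
  dist_comm x y := hn.map_sub_comm (hSB x.2) (hSB y.2)
  dist_triangle x y z := by
    simpa using hn.add_le _ (B.sub_mem (hSB x.2) (hSB y.2)) _ (B.sub_mem (hSB y.2) (hSB z.2))
  eq_of_dist_eq_zero {x y} h := Subtype.ext <| sub_eq_zero.mp <|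
    hn.eq_zero _ (B.sub_mem (hSB x.2) (hSB y.2)) h

def IsSeqCompleteFor (n : E → ℝ) (S : Set E) : Prop :=
  ∀ u : ℕ → E, (∀ k, u k ∈ S) →
    (∀ ε : ℝ, 0 < ε → ∃ N, ∀ m ≥ N, ∀ k ≥ N, n (u m - u k) < ε) →
    ∃ x ∈ S, Tendsto (fun k => n (u k - x)) atTop (𝓝 0)

theorem IsNormOn.completeSpace_sublevel (hn : IsNormOn B n) {S : Set E} (hSB : S ⊆ B)
    (hS : IsSeqCompleteFor n S) (r : ℝ) :
    letI := hn.metricSpace {x ∈ S | n x ≤ r} fun _ hx => hSB hx.1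
    CompleteSpace {x ∈ S | n x ≤ r} := by
  let := hn.metricSpace {x ∈ S | n x ≤ r} fun _ hx => hSB hx.1
  refine Metric.complete_of_cauchySeq_tendsto fun u hu => ?_
  obtain ⟨x, hxS, hlim⟩ := hS (fun k => u k) (fun k => (u k).2.1) (Metric.cauchySeq_iff.mp hu)
  have hxB := hSB hxS
  have hbound : ∀ k, n x ≤ r + n (u k - x) := fun k => by
    have huB := hSB (u k).2.1
    have h := hn.add_le _ (B.sub_mem hxB huB) _ huB
    rw [sub_add_cancel, hn.map_sub_comm hxB huB] at h
    linarith [(u k).2.2]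
  have hxr : n x ≤ r := by
    simpa using ge_of_tendsto' (hlim.const_add r) hbound
  exact ⟨⟨x, hxS, hxr⟩, tendsto_iff_dist_tendsto_zero.mpr hlim⟩

end NormOn

/-- `R μ f` reads "`f` is the equilibrium of the system driven by `μ`". -/
theorem exists_unique_self_rel_of_lipschitz_rel {P : Type*} [MetricSpace P] [CompleteSpace P]
    [Nonempty P] (R : P → P → Prop) {K : ℝ} (hK0 : 0 ≤ K) (hK1 : K < 1)
    (hex : ∀ μ, ∃ f, R μ f)
    (hlip : ∀ μ₁ μ₂ f₁ f₂, R μ₁ f₁ → R μ₂ f₂ → dist f₁ f₂ ≤ K * dist μ₁ μ₂) :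
    ∃ μ, R μ μ ∧ (∀ ν, R ν ν → ν = μ) ∧
      ∀ u : ℕ → P, (∀ k, R (u k) (u (k + 1))) → Tendsto u atTop (𝓝 μ) := by
  choose g hg using hex
  have eq_g : ∀ {μ f}, R μ f → f = g μ := fun {μ f} h =>
    dist_le_zero.mp (by simpa using hlip μ μ f (g μ) h (hg μ))
  have hcontr : ContractingWith ⟨K, hK0⟩ g :=
    ⟨hK1, LipschitzWith.of_dist_le_mul fun μ ν => hlip μ ν _ _ (hg μ) (hg ν)⟩
  refine ⟨hcontr.fixedPoint g, ?_, fun ν hν => hcontr.fixedPoint_unique (eq_g hν).symm,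
    fun u hu => ?_⟩
  · simpa [hcontr.fixedPoint_isFixedPt.eq] using hg (hcontr.fixedPoint g)
  · have hiter : ∀ k, u k = g^[k] (u 0) := by
      intro k
      induction k with
      | zero => rfl
      | succ k ih => rw [Function.iterate_succ_apply', ← ih, ← eq_g (hu k)]
    simpa only [← hiter] using hcontr.tendsto_iterate_fixedPoint (u 0)

theorem stmt_1_general
    {X : Type*} [MeasurableSpace X]
    -- the spaces `B_s ⊆ B_w ⊆ SM(X)` with norms `ns ≥ nw`
    (Bw Bs : Submodule ℝ (VectorMeasure X ℝ))
    (nw ns : VectorMeasure X ℝ → ℝ)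
    (hnw_add : ∀ μ ∈ Bw, ∀ ν ∈ Bw, nw (μ + ν) ≤ nw μ + nw ν)
    (hnw_smul : ∀ (c : ℝ), ∀ μ ∈ Bw, nw (c • μ) = |c| * nw μ)
    (hnw_def : ∀ μ ∈ Bw, nw μ = 0 → μ = 0)
    (hsw : ∀ μ ∈ Bs, nw μ ≤ ns μ)
    -- the sets of probability measures `P_w` and `P_s = P_w ∩ B_s`
    (Pw : Set (VectorMeasure X ℝ))
    (hPwdef : Pw = {μ : VectorMeasure X ℝ | μ ∈ Bw ∧ 0 ≤ μ ∧ μ Set.univ = 1})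
    -- `P_w` is a complete metric space for the `‖·‖_w`-distance
    (hPwcomplete : ∀ u : ℕ → VectorMeasure X ℝ, (∀ k, u k ∈ Pw) →
      (∀ ε : ℝ, 0 < ε → ∃ N, ∀ m ≥ N, ∀ k ≥ N, nw (u m - u k) < ε) →
      ∃ μ ∈ Pw, Tendsto (fun k => nw (u k - μ)) atTop (nhds 0))
    -- the family of Markov operators `L_{δ,μ}`, `μ ∈ P_w`, preserving `B_w` and `B_s`,
    -- uniformly bounded on both spaces
    (L : ℝ → VectorMeasure X ℝ → (VectorMeasure X ℝ →ₗ[ℝ] VectorMeasure X ℝ))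
    -- (Exi1)
    (M₁ : ℝ)
    (hExi1 : ∀ δ : ℝ, 0 ≤ δ → ∀ μ₁ ∈ Pw, ∀ f ∈ Pw, L δ μ₁ f = f → f ∈ Bs ∧ ns f ≤ M₁)
    -- `P_w` contains a probability measure `μ₀` with `‖μ₀‖_w ≤ M₁`
    (μ₀ : VectorMeasure X ℝ) (hμ₀ : μ₀ ∈ Pw) (hμ₀M : nw μ₀ ≤ M₁)
    -- for each `0 ≤ δ < δ̄` and `μ ∈ P_w` with `‖μ‖_w ≤ M₁`, `L_{δ,μ}` has a unique fixed
    -- probability measure `f_μ` in `P_w`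
    (δbar : ℝ)
    (hUnique : ∀ δ : ℝ, 0 ≤ δ → δ < δbar → ∀ μ ∈ Pw, nw μ ≤ M₁ →
      ∃! f : VectorMeasure X ℝ, f ∈ Pw ∧ L δ μ f = f)
    -- (Exi3): Lipschitz statistical stability of the fixed points `f_μ`
    (K₂ : ℝ) (hK₂ : 1 ≤ K₂)
    (hExi3 : ∀ δ : ℝ, 0 ≤ δ → δ < δbar →
      ∀ μ₁ ∈ Pw, ∀ μ₂ ∈ Pw, nw μ₁ ≤ M₁ → nw μ₂ ≤ M₁ →
      ∀ f₁ f₂ : VectorMeasure X ℝ,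
        f₁ ∈ Pw → L δ μ₁ f₁ = f₁ → f₂ ∈ Pw → L δ μ₂ f₂ = f₂ →
        nw (f₁ - f₂) ≤ δ * K₂ * nw (μ₁ - μ₂)) :
    ∀ δ : ℝ, 0 ≤ δ → δ < min δbar (1 / K₂) →
      ∃ μ : VectorMeasure X ℝ,
        (μ ∈ Pw ∧ L δ μ μ = μ) ∧
        -- uniqueness
        (∀ ν : VectorMeasure X ℝ, ν ∈ Pw → L δ ν ν = ν → ν = μ) ∧
        -- `μ` is the limit of any iteration scheme `μ_k` as in the statement
        (∀ u : ℕ → VectorMeasure X ℝ,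
          u 0 ∈ Pw → nw (u 0) ≤ M₁ →
          (∀ k : ℕ, u (k + 1) ∈ Pw ∧ L δ (u k) (u (k + 1)) = u (k + 1)) →
          Tendsto (fun k => nw (u k - μ)) atTop (nhds 0)) := by
  intro δ hδ0 hδlt
  obtain ⟨hδbar, hδK₂⟩ := lt_min_iff.mp hδlt
  have hK : δ * K₂ < 1 := (lt_div_iff₀ (by linarith)).mp hδK₂
  have hnw : IsNormOn Bw nw := ⟨hnw_add, hnw_smul, hnw_def⟩
  have hPwBw : Pw ⊆ Bw := by
    rw [hPwdef]
    exact fun _ h => h.1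
  set P := {m ∈ Pw | nw m ≤ M₁}
  let := hnw.metricSpace P fun _ hm => hPwBw hm.1
  have := hnw.completeSpace_sublevel hPwBw hPwcomplete M₁
  have : Nonempty P := ⟨⟨μ₀, hμ₀, hμ₀M⟩⟩
  have fixed_mem : ∀ μ ∈ Pw, ∀ f ∈ Pw, L δ μ f = f → f ∈ P := fun μ hμ f hf hfix =>
    have hs := hExi1 δ hδ0 μ hμ f hf hfix
    ⟨hf, (hsw f hs.1).trans hs.2⟩
  obtain ⟨μ, hμμ, huniq, hlim⟩ := exists_unique_self_rel_of_lipschitz_rel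
    (fun μ f : P => L δ μ f = f) (by positivity) hK
    (fun μ => by
      obtain ⟨f, hf, hfix⟩ := (hUnique δ hδ0 hδbar μ μ.2.1 μ.2.2).exists
      exact ⟨⟨f, fixed_mem μ μ.2.1 f hf hfix⟩, hfix⟩)
    (fun μ₁ μ₂ f₁ f₂ h₁ h₂ => hExi3 δ hδ0 hδbar μ₁ μ₁.2.1 μ₂ μ₂.2.1 μ₁.2.2 μ₂.2.2 f₁ f₂
      f₁.2.1 h₁ f₂.2.1 h₂)
  refine ⟨μ, ⟨μ.2.1, hμμ⟩, fun ν hν hνν => congrArg Subtype.val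
    (huniq ⟨ν, fixed_mem ν hν ν hν hνν⟩ hνν), fun u hu0 hu0M hu => ?_⟩
  have hmem : ∀ k, u k ∈ P := by
    intro k
    induction k with
    | zero => exact ⟨hu0, hu0M⟩
    | succ k ih => exact fixed_mem (u k) ih.1 (u (k + 1)) (hu k).1 (hu k).2
  exact tendsto_iff_dist_tendsto_zero.mp (hlim (fun k => ⟨u k, hmem k⟩) fun k => (hu k).2)

/-- Theorem `existence` of the paper: existence and uniqueness of the
invariant probability measure of the self-consistent transfer operator
`𝓛_δ(μ) = L_{δ,μ}(μ)` in the weak coupling regime, together with the convergence of the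
constructive iteration scheme. -/
theorem stmt_1
    {X : Type*} [MeasurableSpace X] [MetricSpace X] [CompactSpace X] [BorelSpace X]
    -- the spaces `B_s ⊆ B_w ⊆ SM(X)` with norms `ns ≥ nw`
    (Bw Bs : Submodule ℝ (VectorMeasure X ℝ)) (hBsw : Bs ≤ Bw)
    (nw ns : VectorMeasure X ℝ → ℝ)
    (hnw0 : ∀ μ ∈ Bw, 0 ≤ nw μ)
    (hnw_add : ∀ μ ∈ Bw, ∀ ν ∈ Bw, nw (μ + ν) ≤ nw μ + nw ν)
    (hnw_smul : ∀ (c : ℝ), ∀ μ ∈ Bw, nw (c • μ) = |c| * nw μ)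
    (hnw_def : ∀ μ ∈ Bw, nw μ = 0 → μ = 0)
    (hns0 : ∀ μ ∈ Bs, 0 ≤ ns μ)
    (hns_add : ∀ μ ∈ Bs, ∀ ν ∈ Bs, ns (μ + ν) ≤ ns μ + ns ν)
    (hns_smul : ∀ (c : ℝ), ∀ μ ∈ Bs, ns (c • μ) = |c| * ns μ)
    (hns_def : ∀ μ ∈ Bs, ns μ = 0 → μ = 0)
    (hsw : ∀ μ ∈ Bs, nw μ ≤ ns μ)
    -- the map `μ ↦ μ(X)` is `‖·‖_w`-continuous
    (Cm : ℝ) (hmass : ∀ μ ∈ Bw, |μ Set.univ| ≤ Cm * nw μ)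
    -- a `‖·‖_w`-limit of positive measures is positive
    (hposlim : ∀ (u : ℕ → VectorMeasure X ℝ) (μ : VectorMeasure X ℝ),
      (∀ k, 0 ≤ u k) → Tendsto (fun k => nw (u k - μ)) atTop (nhds 0) → 0 ≤ μ)
    -- the sets of probability measures `P_w` and `P_s = P_w ∩ B_s`
    (Pw Ps : Set (VectorMeasure X ℝ))
    (hPwdef : Pw = {μ : VectorMeasure X ℝ | μ ∈ Bw ∧ 0 ≤ μ ∧ μ Set.univ = 1})
    (hPsdef : Ps = {μ : VectorMeasure X ℝ | μ ∈ Bs} ∩ Pw)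
    -- `P_w` is a complete metric space for the `‖·‖_w`-distance
    (hPwcomplete : ∀ u : ℕ → VectorMeasure X ℝ, (∀ k, u k ∈ Pw) →
      (∀ ε : ℝ, 0 < ε → ∃ N, ∀ m ≥ N, ∀ k ≥ N, nw (u m - u k) < ε) →
      ∃ μ ∈ Pw, Tendsto (fun k => nw (u k - μ)) atTop (nhds 0))
    -- `P_s` is nonempty
    (hPsne : Ps.Nonempty)
    -- the family of Markov operators `L_{δ,μ}`, `μ ∈ P_w`, preserving `B_w` and `B_s`,
    -- uniformly bounded on both spaces
    (L : ℝ → VectorMeasure X ℝ → (VectorMeasure X ℝ →ₗ[ℝ] VectorMeasure X ℝ))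
    (hMarkov : ∀ δ : ℝ, 0 ≤ δ → ∀ μ ∈ Pw,
      (∀ ν : VectorMeasure X ℝ, 0 ≤ ν → 0 ≤ L δ μ ν) ∧
      (∀ ν : VectorMeasure X ℝ, (L δ μ ν) Set.univ = ν Set.univ))
    (Mb : ℝ) (hMb0 : 0 ≤ Mb)
    (hLw : ∀ δ : ℝ, 0 ≤ δ → ∀ μ ∈ Pw, ∀ f ∈ Bw, L δ μ f ∈ Bw ∧ nw (L δ μ f) ≤ Mb * nw f)
    (hLs : ∀ δ : ℝ, 0 ≤ δ → ∀ μ ∈ Pw, ∀ f ∈ Bs, L δ μ f ∈ Bs ∧ ns (L δ μ f) ≤ Mb * ns f)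
    -- (Exi1)
    (M₁ : ℝ) (hM₁0 : 0 ≤ M₁)
    (hExi1 : ∀ δ : ℝ, 0 ≤ δ → ∀ μ₁ ∈ Pw, ∀ f ∈ Pw, L δ μ₁ f = f → f ∈ Bs ∧ ns f ≤ M₁)
    -- (Exi2)
    (K₁ : ℝ) (hK₁0 : 0 ≤ K₁)
    (hExi2 : ∀ δ : ℝ, 0 ≤ δ → ∀ μ₁ ∈ Pw, ∀ μ₂ ∈ Pw, ∀ f ∈ Bs,
      nw (L δ μ₁ f - L δ μ₂ f) ≤ δ * K₁ * nw (μ₁ - μ₂) * ns f)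
    -- `P_w` contains a probability measure `μ₀` with `‖μ₀‖_w ≤ M₁`
    (μ₀ : VectorMeasure X ℝ) (hμ₀ : μ₀ ∈ Pw) (hμ₀M : nw μ₀ ≤ M₁)
    -- for each `0 ≤ δ < δ̄` and `μ ∈ P_w` with `‖μ‖_w ≤ M₁`, `L_{δ,μ}` has a unique fixed
    -- probability measure `f_μ` in `P_w`
    (δbar : ℝ) (hδbar0 : 0 ≤ δbar)
    (hUnique : ∀ δ : ℝ, 0 ≤ δ → δ < δbar → ∀ μ ∈ Pw, nw μ ≤ M₁ →
      ∃! f : VectorMeasure X ℝ, f ∈ Pw ∧ L δ μ f = f)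
    -- (Exi3): Lipschitz statistical stability of the fixed points `f_μ`
    (K₂ : ℝ) (hK₂ : 1 ≤ K₂)
    (hExi3 : ∀ δ : ℝ, 0 ≤ δ → δ < δbar →
      ∀ μ₁ ∈ Pw, ∀ μ₂ ∈ Pw, nw μ₁ ≤ M₁ → nw μ₂ ≤ M₁ →
      ∀ f₁ f₂ : VectorMeasure X ℝ,
        f₁ ∈ Pw → L δ μ₁ f₁ = f₁ → f₂ ∈ Pw → L δ μ₂ f₂ = f₂ →
        nw (f₁ - f₂) ≤ δ * K₂ * nw (μ₁ - μ₂)) :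
    ∀ δ : ℝ, 0 ≤ δ → δ < min δbar (1 / K₂) →
      ∃ μ : VectorMeasure X ℝ,
        (μ ∈ Pw ∧ L δ μ μ = μ) ∧
        -- uniqueness
        (∀ ν : VectorMeasure X ℝ, ν ∈ Pw → L δ ν ν = ν → ν = μ) ∧
        -- `μ` is the limit of any iteration scheme `μ_k` as in the statement
        (∀ u : ℕ → VectorMeasure X ℝ,
          u 0 ∈ Pw → nw (u 0) ≤ M₁ →
          (∀ k : ℕ, u (k + 1) ∈ Pw ∧ L δ (u k) (u (k + 1)) = u (k + 1)) →
          Tendsto (fun k => nw (u k - μ)) atTop (nhds 0)) :=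
  stmt_1_general Bw Bs nw ns hnw_add hnw_smul hnw_def hsw Pw hPwdef hPwcomplete L M₁ hExi1 μ₀ hμ₀
    hμ₀M δbar hUnique K₂ hK₂ hExi3
end

section
/- Let δ ≥ 0 and let L(n) = L_{δ,μ_n} ∘ ⋯ ∘ L_{δ,μ₁} be a sequential composition of operators from a family L_{δ,μ} (μ₁, …, μ_n ∈ P_w) satisfying assumptions (Con1) and (Con2), and let L₀ denote the common operator L_{0,μ} (independent of μ). Assume P_w is bounded in B_w and set Q := sup_{μ ∈ P_w} ‖μ‖_w. Then there is C ≥ 0 such that for every g ∈ B_s and every n ≥ 0: ‖L(n) g − L₀ⁿ g‖_w ≤ δ Q K ( C ‖g‖_s + n (B/(1−λ₁)) ‖g‖_w ), where B and λ₁ are the constants of the Lasota–Yorke inequality in (Con1) and K is the constant of (Con2). -/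
open MeasureTheory Filter

/-- The sequential composition `L(n) = Lseq n ∘ Lseq (n-1) ∘ ⋯ ∘ Lseq 1` (and `L(0) = Id`)
of a sequence of linear operators on the space of signed measures. -/
def seqComp {X : Type*} [MeasurableSpace X]
    (Lseq : ℕ → (VectorMeasure X ℝ →ₗ[ℝ] VectorMeasure X ℝ)) :
    ℕ → (VectorMeasure X ℝ →ₗ[ℝ] VectorMeasure X ℝ)
  | 0 => LinearMap.id
  | (n + 1) => (Lseq (n + 1)).comp (seqComp Lseq n)

/-!
The error `eₙ = L₀ⁿ g − L(n) g` satisfies `eₙ₊₁ = (L₀ − L_{δ,μₙ₊₁}) L₀ⁿ g + L_{δ,μₙ₊₁} eₙ`.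
Each `L_{δ,μ}` is a weak contraction and (Con2) bounds the first term by `δ K Q ‖L₀ⁿ g‖_s`, so
`‖eₙ‖_w ≤ δ Q K ∑_{k<n} ‖L₀ᵏ g‖_s`. The Lasota–Yorke inequality for `L₀ = L_{0,μ}` gives
`‖L₀ᵏ g‖_s ≤ λ₁ᵏ ‖g‖_s + B/(1−λ₁) ‖g‖_w`, and summing the geometric series yields the claim
with `C = 1/(1−λ₁)`.
-/

section SeminormOnSubmodule

variable {E : Type*} [AddCommGroup E] [Module ℝ E] {Bw Bs : Submodule ℝ E} {nw ns : E → ℝ}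

lemma seminorm_zero_of_smul (hsmul : ∀ (c : ℝ), ∀ μ ∈ Bw, nw (c • μ) = |c| * nw μ) :
    nw 0 = 0 := by
  simpa using hsmul 0 0 Bw.zero_mem

lemma seminorm_sub_comm (hsmul : ∀ (c : ℝ), ∀ μ ∈ Bw, nw (c • μ) = |c| * nw μ)
    {μ ν : E} (hμ : μ ∈ Bw) (hν : ν ∈ Bw) : nw (μ - ν) = nw (ν - μ) := by
  simpa [neg_one_smul] using hsmul (-1) (ν - μ) (Bw.sub_mem hν hμ)

lemma iterate_mem {S : E →ₗ[ℝ] E} (hS : ∀ f ∈ Bs, S f ∈ Bs) (n : ℕ) {g : E} (hg : g ∈ Bs) :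
    (S ^ n) g ∈ Bs := by
  rw [Module.End.pow_apply]
  exact Set.MapsTo.iterate (f := S) hS n hg

variable {S : E →ₗ[ℝ] E} {lam B : ℝ}

lemma weak_iterate_le (hS : ∀ f ∈ Bs, S f ∈ Bs) (hSw : ∀ f ∈ Bs, nw (S f) ≤ nw f)
    {g : E} (hg : g ∈ Bs) (n : ℕ) : nw ((S ^ n) g) ≤ nw g := by
  induction n with
  | zero => simp
  | succ n ih =>
    rw [pow_succ', Module.End.mul_apply]
    exact (hSw _ (iterate_mem hS n hg)).trans ih

lemma strong_iterate_le (hS : ∀ f ∈ Bs, S f ∈ Bs)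
    (hLY : ∀ f ∈ Bs, nw (S f) ≤ nw f ∧ ns (S f) ≤ lam * ns f + B * nw f)
    (hlam0 : 0 ≤ lam) (hlam : lam < 1) (hB : 0 ≤ B) {g : E} (hg : g ∈ Bs) (hg0 : 0 ≤ nw g)
    (n : ℕ) : ns ((S ^ n) g) ≤ lam ^ n * ns g + B / (1 - lam) * nw g := by
  have h1lam : 0 < 1 - lam := by linarith
  induction n with
  | zero =>
    have : 0 ≤ B / (1 - lam) * nw g := by positivity
    simpa using this
  | succ n ih =>
    have hmem := iterate_mem hS n hg
    have hweak := weak_iterate_le hS (fun f hf => (hLY f hf).1) hg n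
    calc ns ((S ^ (n + 1)) g) = ns (S ((S ^ n) g)) := by rw [pow_succ', Module.End.mul_apply]
      _ ≤ lam * ns ((S ^ n) g) + B * nw ((S ^ n) g) := (hLY _ hmem).2
      _ ≤ lam * (lam ^ n * ns g + B / (1 - lam) * nw g) + B * nw g := by gcongr
      _ = lam ^ (n + 1) * ns g + B / (1 - lam) * nw g := by field_simp; ring

end SeminormOnSubmodule

section SequentialComposition

variable {X : Type*} [MeasurableSpace X] {Bw Bs : Submodule ℝ (VectorMeasure X ℝ)}
  {nw ns : VectorMeasure X ℝ → ℝ} {T : ℕ → (VectorMeasure X ℝ →ₗ[ℝ] VectorMeasure X ℝ)}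

lemma seqComp_mem (hT : ∀ i, 1 ≤ i → ∀ f ∈ Bs, T i f ∈ Bs) {g : VectorMeasure X ℝ}
    (hg : g ∈ Bs) : ∀ n, seqComp T n g ∈ Bs
  | 0 => hg
  | n + 1 => hT (n + 1) n.succ_pos _ (seqComp_mem hT hg n)

lemma seminorm_iterate_sub_seqComp_le (hBsw : Bs ≤ Bw)
    (hnw_add : ∀ μ ∈ Bw, ∀ ν ∈ Bw, nw (μ + ν) ≤ nw μ + nw ν) (hnw_zero : nw 0 = 0)
    {S : VectorMeasure X ℝ →ₗ[ℝ] VectorMeasure X ℝ} (hS : ∀ f ∈ Bs, S f ∈ Bs)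
    (hT : ∀ i, 1 ≤ i → ∀ f ∈ Bs, T i f ∈ Bs) (hTw : ∀ i, 1 ≤ i → ∀ f ∈ Bs, nw (T i f) ≤ nw f)
    {ε : ℝ} (hST : ∀ i, 1 ≤ i → ∀ f ∈ Bs, nw (S f - T i f) ≤ ε * ns f)
    {g : VectorMeasure X ℝ} (hg : g ∈ Bs) (n : ℕ) :
    nw ((S ^ n) g - seqComp T n g) ≤ ε * ∑ k ∈ Finset.range n, ns ((S ^ k) g) := by
  induction n with
  | zero => simp [seqComp, hnw_zero]
  | succ n ih =>
    set f := (S ^ n) g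
    set h := seqComp T n g
    have hf : f ∈ Bs := iterate_mem hS n hg
    have hh : h ∈ Bs := seqComp_mem hT hg n
    have hsplit :
        (S ^ (n + 1)) g - seqComp T (n + 1) g = (S f - T (n + 1) f) + T (n + 1) (f - h) := by
      rw [pow_succ', Module.End.mul_apply, map_sub]
      simp only [seqComp, LinearMap.comp_apply, sub_add_sub_cancel, f, h]
    calc nw ((S ^ (n + 1)) g - seqComp T (n + 1) g)
        ≤ nw (S f - T (n + 1) f) + nw (T (n + 1) (f - h)) := by
          rw [hsplit]
          exact hnw_add _ (hBsw (Bs.sub_mem (hS f hf) (hT _ n.succ_pos f hf)))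
            _ (hBsw (hT _ n.succ_pos _ (Bs.sub_mem hf hh)))
      _ ≤ ε * ns f + nw (f - h) :=
          add_le_add (hST _ n.succ_pos f hf) (hTw _ n.succ_pos _ (Bs.sub_mem hf hh))
      _ ≤ ε * ∑ k ∈ Finset.range (n + 1), ns ((S ^ k) g) := by
          rw [Finset.sum_range_succ]; linarith

end SequentialComposition

lemma geom_sum_mul_add_le {lam a b : ℝ} (hlam0 : 0 ≤ lam) (hlam : lam < 1) (ha : 0 ≤ a) (n : ℕ) :
    ∑ k ∈ Finset.range n, (lam ^ k * a + b) ≤ a / (1 - lam) + n * b := by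
  have hgeom : ∑ k ∈ Finset.range n, lam ^ k ≤ 1 / (1 - lam) := by
    simpa using geom_sum_Ico_le_of_lt_one (m := 0) (n := n) hlam0 hlam
  rw [Finset.sum_add_distrib, ← Finset.sum_mul, Finset.sum_const, Finset.card_range, nsmul_eq_mul]
  have := mul_le_mul_of_nonneg_right hgeom ha
  rw [one_div_mul_eq_div] at this
  linarith

theorem stmt_3_general
    {X : Type*} [MeasurableSpace X]
    (Bw Bs : Submodule ℝ (VectorMeasure X ℝ)) (hBsw : Bs ≤ Bw)
    (nw ns : VectorMeasure X ℝ → ℝ)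
    (hnw0 : ∀ μ ∈ Bw, 0 ≤ nw μ)
    (hnw_add : ∀ μ ∈ Bw, ∀ ν ∈ Bw, nw (μ + ν) ≤ nw μ + nw ν)
    (hnw_smul : ∀ (c : ℝ), ∀ μ ∈ Bw, nw (c • μ) = |c| * nw μ)
    (hns0 : ∀ μ ∈ Bs, 0 ≤ ns μ)
    -- `P_w`: the probability measures in `B_w`
    (Pw : Set (VectorMeasure X ℝ))
    -- `P_w` is bounded in `B_w`, with `Q = sup_{μ ∈ P_w} ‖μ‖_w`
    (Q : ℝ) (hQ0 : 0 ≤ Q) (hQ : ∀ μ ∈ Pw, nw μ ≤ Q)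
    -- the family of Markov operators `L_{δ,μ}`, preserving `B_w` and `B_s`
    (L : ℝ → VectorMeasure X ℝ → (VectorMeasure X ℝ →ₗ[ℝ] VectorMeasure X ℝ))
    (hLs : ∀ δ : ℝ, 0 ≤ δ → ∀ μ ∈ Pw, ∀ f ∈ Bs, L δ μ f ∈ Bs)
    -- (Con1): the common "one step" Lasota–Yorke inequality
    (δhat B lam : ℝ) (hB : 0 ≤ B) (hlam0 : 0 ≤ lam) (hlam : lam < 1)
    (hCon1 : ∀ δ : ℝ, 0 ≤ δ → δ ≤ δhat → ∀ μ ∈ Pw, ∀ f ∈ Bs,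
      nw (L δ μ f) ≤ nw f ∧ ns (L δ μ f) ≤ lam * ns f + B * nw f)
    -- (Con2), with `L₀` the common operator `L_{0,μ}`
    (K : ℝ) (hK : 1 ≤ K)
    (L0 : VectorMeasure X ℝ →ₗ[ℝ] VectorMeasure X ℝ)
    (hL0 : ∀ μ ∈ Pw, L 0 μ = L0)
    (hCon2' : ∀ δ : ℝ, 0 ≤ δ → δ ≤ δhat → ∀ ν ∈ Pw, ∀ f ∈ Bs,
      nw (L0 f - L δ ν f) ≤ δ * K * nw ν * ns f)
    -- the parameter `δ` and the sequence `μ₁, μ₂, … ∈ P_w`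
    (δ : ℝ) (hδ0 : 0 ≤ δ) (hδ : δ ≤ δhat)
    (μseq : ℕ → VectorMeasure X ℝ) (hμseq : ∀ i, 1 ≤ i → μseq i ∈ Pw) :
    ∃ C : ℝ, 0 ≤ C ∧
      ∀ g ∈ Bs, ∀ n : ℕ,
        nw (seqComp (fun i => L δ (μseq i)) n g - (L0 ^ n) g)
          ≤ δ * Q * K * (C * ns g + n * (B / (1 - lam)) * nw g) := by
  have hμ₁ := hμseq 1 le_rfl
  have hL0LY : ∀ f ∈ Bs, nw (L0 f) ≤ nw f ∧ ns (L0 f) ≤ lam * ns f + B * nw f := by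
    rw [← hL0 _ hμ₁]; exact hCon1 0 le_rfl (hδ0.trans hδ) _ hμ₁
  have hL0s : ∀ f ∈ Bs, L0 f ∈ Bs := by
    rw [← hL0 _ hμ₁]; exact hLs 0 le_rfl _ hμ₁
  have hK0 : 0 ≤ K := zero_le_one.trans hK
  have hclose : ∀ i, 1 ≤ i → ∀ f ∈ Bs, nw (L0 f - L δ (μseq i) f) ≤ δ * Q * K * ns f :=
    fun i hi f hf => calc
      _ ≤ δ * K * nw (μseq i) * ns f := hCon2' δ hδ0 hδ _ (hμseq i hi) f hf
      _ ≤ δ * K * Q * ns f := by gcongr; exacts [hns0 f hf, hQ _ (hμseq i hi)]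
      _ = δ * Q * K * ns f := by ring
  have hLδs : ∀ i, 1 ≤ i → ∀ f ∈ Bs, L δ (μseq i) f ∈ Bs := fun i hi => hLs δ hδ0 _ (hμseq i hi)
  refine ⟨1 / (1 - lam), by have := sub_pos.2 hlam; positivity, fun g hg n => ?_⟩
  calc nw (seqComp (fun i => L δ (μseq i)) n g - (L0 ^ n) g)
      = nw ((L0 ^ n) g - seqComp (fun i => L δ (μseq i)) n g) :=
        seminorm_sub_comm hnw_smul (hBsw (seqComp_mem hLδs hg n)) (hBsw (iterate_mem hL0s n hg))
    _ ≤ δ * Q * K * ∑ k ∈ Finset.range n, ns ((L0 ^ k) g) :=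
        seminorm_iterate_sub_seqComp_le hBsw hnw_add (seminorm_zero_of_smul hnw_smul) hL0s hLδs
          (fun i hi f hf => (hCon1 δ hδ0 hδ _ (hμseq i hi) f hf).1) hclose hg n
    _ ≤ δ * Q * K * ∑ k ∈ Finset.range n, (lam ^ k * ns g + B / (1 - lam) * nw g) := by
        gcongr with k
        exact strong_iterate_le hL0s hL0LY hlam0 hlam hB hg (hnw0 g (hBsw hg)) k
    _ ≤ δ * Q * K * (ns g / (1 - lam) + n * (B / (1 - lam) * nw g)) := by
        gcongr
        exact geom_sum_mul_add_le hlam0 hlam (hns0 g hg) n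
    _ = δ * Q * K * (1 / (1 - lam) * ns g + n * (B / (1 - lam)) * nw g) := by ring

/-- Lemma `XXX` of the paper: comparison of a sequential composition
`L(n) = L_{δ,μ_n} ∘ ⋯ ∘ L_{δ,μ₁}` with the iterates of the uncoupled operator `L₀`. -/
theorem stmt_3
    {X : Type*} [MeasurableSpace X] [MetricSpace X] [CompactSpace X] [BorelSpace X]
    (Bw Bs : Submodule ℝ (VectorMeasure X ℝ)) (hBsw : Bs ≤ Bw)
    (nw ns : VectorMeasure X ℝ → ℝ)
    (hnw0 : ∀ μ ∈ Bw, 0 ≤ nw μ)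
    (hnw_add : ∀ μ ∈ Bw, ∀ ν ∈ Bw, nw (μ + ν) ≤ nw μ + nw ν)
    (hnw_smul : ∀ (c : ℝ), ∀ μ ∈ Bw, nw (c • μ) = |c| * nw μ)
    (hns0 : ∀ μ ∈ Bs, 0 ≤ ns μ)
    (hns_add : ∀ μ ∈ Bs, ∀ ν ∈ Bs, ns (μ + ν) ≤ ns μ + ns ν)
    (hns_smul : ∀ (c : ℝ), ∀ μ ∈ Bs, ns (c • μ) = |c| * ns μ)
    (hsw : ∀ μ ∈ Bs, nw μ ≤ ns μ)
    -- `P_w`: the probability measures in `B_w`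
    (Pw : Set (VectorMeasure X ℝ))
    (hPw : Pw = {μ : VectorMeasure X ℝ | μ ∈ Bw ∧ 0 ≤ μ ∧ μ Set.univ = 1})
    -- `P_w` is bounded in `B_w`, with `Q = sup_{μ ∈ P_w} ‖μ‖_w`
    (Q : ℝ) (hQ0 : 0 ≤ Q) (hQ : ∀ μ ∈ Pw, nw μ ≤ Q)
    -- the family of Markov operators `L_{δ,μ}`, preserving `B_w` and `B_s`
    (L : ℝ → VectorMeasure X ℝ → (VectorMeasure X ℝ →ₗ[ℝ] VectorMeasure X ℝ))
    (hMarkov : ∀ δ : ℝ, 0 ≤ δ → ∀ μ ∈ Pw,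
      (∀ ν : VectorMeasure X ℝ, 0 ≤ ν → 0 ≤ L δ μ ν) ∧
      (∀ ν : VectorMeasure X ℝ, (L δ μ ν) Set.univ = ν Set.univ))
    (hLw : ∀ δ : ℝ, 0 ≤ δ → ∀ μ ∈ Pw, ∀ f ∈ Bw, L δ μ f ∈ Bw)
    (hLs : ∀ δ : ℝ, 0 ≤ δ → ∀ μ ∈ Pw, ∀ f ∈ Bs, L δ μ f ∈ Bs)
    -- (Con1): the common "one step" Lasota–Yorke inequality
    (δhat B lam : ℝ) (hδhat : 0 ≤ δhat) (hB : 0 ≤ B) (hlam0 : 0 ≤ lam) (hlam : lam < 1)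
    (hCon1 : ∀ δ : ℝ, 0 ≤ δ → δ ≤ δhat → ∀ μ ∈ Pw, ∀ f ∈ Bs,
      nw (L δ μ f) ≤ nw f ∧ ns (L δ μ f) ≤ lam * ns f + B * nw f)
    -- (Con2), with `L₀` the common operator `L_{0,μ}`
    (K : ℝ) (hK : 1 ≤ K)
    (L0 : VectorMeasure X ℝ →ₗ[ℝ] VectorMeasure X ℝ)
    (hL0 : ∀ μ ∈ Pw, L 0 μ = L0)
    (hCon2 : ∀ δ : ℝ, 0 ≤ δ → δ ≤ δhat → ∀ μ ∈ Pw, ∀ ν ∈ Pw, ∀ f ∈ Bs,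
      nw (L δ μ f - L δ ν f) ≤ δ * K * nw (μ - ν) * ns f)
    (hCon2' : ∀ δ : ℝ, 0 ≤ δ → δ ≤ δhat → ∀ ν ∈ Pw, ∀ f ∈ Bs,
      nw (L0 f - L δ ν f) ≤ δ * K * nw ν * ns f)
    -- the parameter `δ` and the sequence `μ₁, μ₂, … ∈ P_w`
    (δ : ℝ) (hδ0 : 0 ≤ δ) (hδ : δ ≤ δhat)
    (μseq : ℕ → VectorMeasure X ℝ) (hμseq : ∀ i, 1 ≤ i → μseq i ∈ Pw) :
    ∃ C : ℝ, 0 ≤ C ∧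
      ∀ g ∈ Bs, ∀ n : ℕ,
        nw (seqComp (fun i => L δ (μseq i)) n g - (L0 ^ n) g)
          ≤ δ * Q * K * (C * ns g + n * (B / (1 - lam)) * nw g) :=
  stmt_3_general Bw Bs hBsw nw ns hnw0 hnw_add hnw_smul hns0 Pw Q hQ0 hQ L hLs δhat B lam hB hlam0
    hlam hCon1 K hK L0 hL0 hCon2' δ hδ0 hδ μseq hμseq
end

section
/- Let L_{δ,μ} (μ ∈ P_w, δ ≥ 0) be a family of Markov operators acting on B_ss, B_s and B_w, satisfying assumptions (Con1), (Con2) and (Con3) for some δ̂ > 0, and suppose sup_{μ ∈ P_w, δ ≤ δ̂} ‖L_{δ,μ}‖_{B_ss→B_ss} < +∞. For each δ ≤ δ̂ consider the self-consistent operator 𝓛_δ(μ) := L_{δ,μ}(μ), and suppose that for each such δ there is an invariant probability measure μ_δ ∈ P_ss of 𝓛_δ (i.e. 𝓛_δ(μ_δ) = μ_δ) with sup_{δ ≤ δ̂} ‖μ_δ‖_ss < +∞. Then there exist 0 < δ̄ < δ̂ and constants C ≥ 0, γ > 0 such that for every n ∈ ℕ, every 0 < δ < δ̄ and every ν ∈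 P_ss: ‖𝓛_δⁿ(ν) − μ_δ‖_s ≤ C e^{−γ n} ‖ν − μ_δ‖_s. -/
/-!
Write `F_δ ρ = L_{δ,ρ} ρ` and `μ = μ_δ`. Since
`F_δ ρ - μ = L_{δ,ρ} (ρ - μ) + (L_{δ,ρ} - L_{δ,μ}) μ`, (Con1) and (Con2) give along every orbit a
Lasota–Yorke inequality
`‖F_δ ρ - μ‖_s ≤ λ ‖ρ - μ‖_s + (B + K M) ‖ρ - μ‖_w` and a weak bound
`‖F_δ ρ - μ‖_w ≤ (1 + δ K M) ‖ρ - μ‖_w`, where `M` bounds `‖μ_δ‖_ss`. Comparing `F_δ^k` with `L₀^k`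
step by step and applying (Con3) gives `‖F_δ^k ρ - μ‖_w ≤ (a_k + δ c_k) ‖ρ - μ‖_s`.
Choose `N₁` with `a_{N₁}` small, then `N` with `λ^N (1 + B + K M)^{N₁}` small, and only then `δ`
small: running the Lasota–Yorke inequality for `N` steps from time `N₁`, while the weak norm stays
small, halves `‖ρ - μ‖_s` in `N + N₁` steps with constants independent of `δ`, and iterating these
blocks gives exponential decay.
-/

open MeasureTheory Filter

def selfConsistentMap {R E : Type*} [Semiring R] [AddCommMonoid E] [Module R E]
    (A : E → E →ₗ[R] E) (ρ : E) : E :=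
  A ρ ρ

theorem selfConsistentMap_sub_eq {R E : Type*} [Ring R] [AddCommGroup E] [Module R E]
    {A : E → E →ₗ[R] E} {μ : E} (hfix : A μ μ = μ) (ρ : E) :
    selfConsistentMap A ρ - μ = A ρ (ρ - μ) + (A ρ μ - A μ μ) := by
  rw [selfConsistentMap, map_sub, hfix]
  abel

structure IsSeminormOn {E : Type*} [AddCommGroup E] [Module ℝ E] (V : Submodule ℝ E)
    (n : E → ℝ) : Prop where
  add_le : ∀ x ∈ V, ∀ y ∈ V, n (x + y) ≤ n x + n y
  smul_eq : ∀ (c : ℝ), ∀ x ∈ V, n (c • x) = |c| * n x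

namespace IsSeminormOn

variable {E : Type*} [AddCommGroup E] [Module ℝ E] {V W : Submodule ℝ E} {n : E → ℝ} {x y : E}

theorem map_zero (hn : IsSeminormOn V n) : n 0 = 0 := by
  simpa using hn.smul_eq 0 0 V.zero_mem

theorem map_neg (hn : IsSeminormOn V n) (hx : x ∈ V) : n (-x) = n x := by
  simpa using hn.smul_eq (-1) x hx

theorem nonneg (hn : IsSeminormOn V n) (hx : x ∈ V) : 0 ≤ n x := by
  have h := hn.add_le x hx (-x) (V.neg_mem hx)
  rw [add_neg_cancel, hn.map_zero, hn.map_neg hx] at h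
  linarith

theorem sub_le (hn : IsSeminormOn V n) (hx : x ∈ V) (hy : y ∈ V) : n (x - y) ≤ n x + n y := by
  rw [sub_eq_add_neg, ← hn.map_neg hy]
  exact hn.add_le x hx (-y) (V.neg_mem hy)

theorem mono (hn : IsSeminormOn V n) (hWV : W ≤ V) : IsSeminormOn W n :=
  ⟨fun x hx y hy => hn.add_le x (hWV hx) y (hWV hy), fun c x hx => hn.smul_eq c x (hWV hx)⟩

theorem selfConsistentMap_sub_le (hn : IsSeminormOn V n) {A : E → E →ₗ[ℝ] E} {μ ρ : E}
    (hfix : A μ μ = μ) (hA : ∀ f ∈ V, A ρ f ∈ V) (hμ : μ ∈ V) (hρ : ρ ∈ V) :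
    n (selfConsistentMap A ρ - μ) ≤ n (A ρ (ρ - μ)) + n (A ρ μ - A μ μ) := by
  rw [selfConsistentMap_sub_eq hfix]
  exact hn.add_le _ (hA _ (V.sub_mem hρ hμ)) _ (V.sub_mem (hA μ hμ) (by rw [hfix]; exact hμ))

end IsSeminormOn

theorem le_pow_mul_add_of_forall_le_mul_add {s w : ℕ → ℝ} {lam b W : ℝ} {n : ℕ}
    (hlam0 : 0 ≤ lam) (hlam1 : lam < 1) (hb : 0 ≤ b) (hW : 0 ≤ W)
    (hs : ∀ k < n, s (k + 1) ≤ lam * s k + b * w k) (hw : ∀ k < n, w k ≤ W) :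
    s n ≤ lam ^ n * s 0 + b / (1 - lam) * W := by
  have hlam : 0 < 1 - lam := sub_pos.2 hlam1
  induction n with
  | zero => simpa using mul_nonneg (div_nonneg hb hlam.le) hW
  | succ n ih =>
    have ih := ih (fun k hk => hs k (by omega)) (fun k hk => hw k (by omega))
    calc s (n + 1) ≤ lam * s n + b * w n := hs n (by omega)
      _ ≤ lam * (lam ^ n * s 0 + b / (1 - lam) * W) + b * W := by
          gcongr
          exact hw n (by omega)
      _ = lam ^ (n + 1) * s 0 + b / (1 - lam) * W := by
          field_simp
          ring

theorem le_one_add_mul_of_le_mul_add {s s' w lam b : ℝ} (hlam : lam ≤ 1) (hb : 0 ≤ b)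
    (hs : 0 ≤ s) (hws : w ≤ s) (h : s' ≤ lam * s + b * w) : s' ≤ (1 + b) * s := by
  nlinarith

theorem pow_div_le_inv_mul_exp {θ : ℝ} (hθ0 : 0 < θ) (hθ1 : θ ≤ 1) {N : ℕ} (hN : 0 < N)
    (n : ℕ) : θ ^ (n / N) ≤ θ⁻¹ * Real.exp (-(Real.log θ⁻¹ / N) * n) := by
  have hlog : Real.log θ ≤ 0 := Real.log_nonpos hθ0.le hθ1
  have hn : (n : ℝ) / N ≤ (n / N : ℕ) + 1 := by
    rw [div_le_iff₀ (by exact_mod_cast hN)]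
    exact_mod_cast (by nlinarith [Nat.lt_div_mul_add (a := n) hN] : n ≤ (n / N + 1) * N)
  calc θ ^ (n / N) = Real.exp ((n / N : ℕ) * Real.log θ) := by
        rw [Real.exp_nat_mul, Real.exp_log hθ0]
    _ ≤ Real.exp (Real.log θ⁻¹ + -(Real.log θ⁻¹ / N) * n) := by
        rw [Real.exp_le_exp, Real.log_inv]
        have h := mul_le_mul_of_nonpos_left hn hlog
        have e : -(-Real.log θ / N) * n = Real.log θ * (n / N) := by ring
        linarith
    _ = θ⁻¹ * Real.exp (-(Real.log θ⁻¹ / N) * n) := by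
        rw [Real.exp_add, Real.exp_log (inv_pos.2 hθ0)]

theorem exists_forall_of_eventually_nhds_zero {p : ℝ → Prop} (hp : ∀ᶠ δ in nhds 0, p δ)
    {δhat : ℝ} (hδhat : 0 < δhat) :
    ∃ δbar, 0 < δbar ∧ δbar < δhat ∧ ∀ δ, 0 < δ → δ < δbar → p δ := by
  obtain ⟨ε, hε, hball⟩ := Metric.eventually_nhds_iff.1 hp
  refine ⟨min ε (δhat / 2), lt_min hε (half_pos hδhat),
    (min_le_right _ _).trans_lt (half_lt_self hδhat), fun δ hδ0 hδ => hball ?_⟩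
  rw [Real.dist_eq, sub_zero, abs_of_pos hδ0]
  exact hδ.trans_le (min_le_left _ _)

section Iterate

variable {α : Type*} {T : α → α} {S : Set α}

theorem iterate_le_pow_mul (hT : Set.MapsTo T S S) {φ : α → ℝ} {R : ℝ} (hR : 0 ≤ R)
    (hstep : ∀ x ∈ S, φ (T x) ≤ R * φ x) {x : α} (hx : x ∈ S) (k : ℕ) :
    φ (T^[k] x) ≤ R ^ k * φ x := by
  induction k with
  | zero => simp
  | succ k ih =>
    rw [Function.iterate_succ_apply', pow_succ', mul_assoc]
    exact (hstep _ (hT.iterate k hx)).trans (mul_le_mul_of_nonneg_left ih hR)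

theorem le_mul_exp_of_iterate_le_mul (hT : Set.MapsTo T S S) {φ : α → ℝ} {R θ : ℝ} {N : ℕ}
    (hN : 0 < N) (hR : 1 ≤ R) (hθ0 : 0 < θ) (hθ1 : θ ≤ 1) (hφ : ∀ x ∈ S, 0 ≤ φ x)
    (hstep : ∀ x ∈ S, φ (T x) ≤ R * φ x) (hblock : ∀ x ∈ S, φ (T^[N] x) ≤ θ * φ x)
    {x : α} (hx : x ∈ S) (n : ℕ) :
    φ (T^[n] x) ≤ R ^ N / θ * Real.exp (-(Real.log θ⁻¹ / N) * n) * φ x := by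
  have hy : T^[N * (n / N)] x ∈ S := hT.iterate _ hx
  have hdecay : φ (T^[N * (n / N)] x) ≤ θ ^ (n / N) * φ x := by
    rw [Function.iterate_mul]
    exact iterate_le_pow_mul (hT.iterate N) hθ0.le hblock hx _
  calc φ (T^[n] x) = φ (T^[n % N] (T^[N * (n / N)] x)) := by
        rw [← Function.iterate_add_apply, Nat.mod_add_div]
    _ ≤ R ^ (n % N) * φ (T^[N * (n / N)] x) :=
        iterate_le_pow_mul hT (by linarith) hstep hy _
    _ ≤ R ^ N * (θ ^ (n / N) * φ x) :=
        mul_le_mul (pow_le_pow_right₀ hR (Nat.mod_lt n hN).le) hdecay (hφ _ hy)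
          (pow_nonneg (by linarith) _)
    _ ≤ R ^ N * (θ⁻¹ * Real.exp (-(Real.log θ⁻¹ / N) * n) * φ x) :=
        mul_le_mul_of_nonneg_left (mul_le_mul_of_nonneg_right
          (pow_div_le_inv_mul_exp hθ0 hθ1 hN n) (hφ x hx)) (pow_nonneg (by linarith) _)
    _ = R ^ N / θ * Real.exp (-(Real.log θ⁻¹ / N) * n) * φ x := by ring

theorem iterate_add_le_of_lasotaYorke (hT : Set.MapsTo T S S) {s w : α → ℝ} {lam b g η : ℝ}
    (hlam0 : 0 ≤ lam) (hlam1 : lam < 1) (hb : 0 ≤ b) (hg : 1 ≤ g) (hη : 0 ≤ η)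
    (hw0 : ∀ x ∈ S, 0 ≤ w x) (hws : ∀ x ∈ S, w x ≤ s x)
    (hs : ∀ x ∈ S, s (T x) ≤ lam * s x + b * w x) (hwT : ∀ x ∈ S, w (T x) ≤ g * w x)
    {N₁ : ℕ} (hN₁ : ∀ x ∈ S, w (T^[N₁] x) ≤ η * s x) (N : ℕ) {x : α} (hx : x ∈ S) :
    s (T^[N + N₁] x) ≤ (lam ^ N * (1 + b) ^ N₁ + b / (1 - lam) * (g ^ N * η)) * s x := by
  have hy : T^[N₁] x ∈ S := hT.iterate N₁ hx
  have hsx : 0 ≤ s x := (hw0 x hx).trans (hws x hx)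
  have hweak : ∀ i < N, w (T^[i] (T^[N₁] x)) ≤ g ^ N * η * s x := fun i hi =>
    calc w (T^[i] (T^[N₁] x)) ≤ g ^ i * w (T^[N₁] x) :=
          iterate_le_pow_mul hT (by linarith) hwT hy i
      _ ≤ g ^ N * (η * s x) :=
          mul_le_mul (pow_le_pow_right₀ hg hi.le) (hN₁ x hx) (hw0 _ hy) (by positivity)
      _ = g ^ N * η * s x := by ring
  have hLY := le_pow_mul_add_of_forall_le_mul_add (s := fun i => s (T^[i] (T^[N₁] x)))
    hlam0 hlam1 hb (by positivity)
    (fun k _ => by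
      simpa only [Function.iterate_succ_apply'] using hs _ (hT.iterate k hy)) hweak
  have hsy : s (T^[N₁] x) ≤ (1 + b) ^ N₁ * s x :=
    iterate_le_pow_mul hT (by linarith) (fun y hy => le_one_add_mul_of_le_mul_add hlam1.le hb
      ((hw0 y hy).trans (hws y hy)) (hws y hy) (hs y hy)) hx N₁
  rw [Function.iterate_add_apply]
  refine hLY.trans ?_
  simp only [Function.iterate_zero, id]
  have := mul_le_mul_of_nonneg_left hsy (pow_nonneg hlam0 N)
  linarith

end Iterate

/-- `Pss` stands for the probability measures in `Bss`. It enters only through its invariance under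
the self-consistent maps and through (Con3), stated for differences of its elements. -/
structure WeakCouplingFamily (E : Type*) [AddCommGroup E] [Module ℝ E] where
  (Bw Bs Bss : Submodule ℝ E)
  (nw ns nss : E → ℝ)
  (Pw Pss : Set E)
  (L : ℝ → E → E →ₗ[ℝ] E)
  (L0 : E →ₗ[ℝ] E)
  (a : ℕ → ℝ)
  (μ : ℝ → E)
  (δhat lam B K Q M : ℝ)
  bs_le_bw : Bs ≤ Bw
  bss_le_bs : Bss ≤ Bs
  isSeminormOn_nw : IsSeminormOn Bw nw
  isSeminormOn_ns : IsSeminormOn Bs ns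
  nw_le_ns : ∀ f ∈ Bs, nw f ≤ ns f
  ns_le_nss : ∀ f ∈ Bss, ns f ≤ nss f
  pss_subset_bss : Pss ⊆ Bss
  pss_subset_pw : Pss ⊆ Pw
  nw_le_Q : ∀ ρ ∈ Pw, nw ρ ≤ Q
  mapsTo : ∀ δ : ℝ, 0 ≤ δ → Set.MapsTo (selfConsistentMap (L δ)) Pss Pss
  L_mem : ∀ δ : ℝ, 0 ≤ δ → ∀ ρ ∈ Pw, ∀ f ∈ Bs, L δ ρ f ∈ Bs
  δhat_pos : 0 < δhat
  lam_nonneg : 0 ≤ lam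
  lam_lt_one : lam < 1
  B_nonneg : 0 ≤ B
  K_nonneg : 0 ≤ K
  con1 : ∀ δ : ℝ, 0 ≤ δ → δ ≤ δhat → ∀ ρ ∈ Pw, ∀ f ∈ Bs,
    nw (L δ ρ f) ≤ nw f ∧ ns (L δ ρ f) ≤ lam * ns f + B * nw f
  L_zero : ∀ ρ ∈ Pw, L 0 ρ = L0
  con2w : ∀ δ : ℝ, 0 ≤ δ → δ ≤ δhat → ∀ ρ ∈ Pw, ∀ σ ∈ Pw, ∀ f ∈ Bs,
    nw (L δ ρ f - L δ σ f) ≤ δ * K * nw (ρ - σ) * ns f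
  con2s : ∀ δ : ℝ, 0 ≤ δ → δ ≤ δhat → ∀ ρ ∈ Pw, ∀ σ ∈ Pw, ∀ f ∈ Bss,
    ns (L δ ρ f - L δ σ f) ≤ δ * K * nw (ρ - σ) * nss f
  con2_L0 : ∀ δ : ℝ, 0 ≤ δ → δ ≤ δhat → ∀ ρ ∈ Pw, ∀ f ∈ Bs,
    nw (L0 f - L δ ρ f) ≤ δ * K * nw ρ * ns f
  a_nonneg : ∀ n, 0 ≤ a n
  tendsto_a : Tendsto a atTop (nhds 0)
  con3 : ∀ n : ℕ, ∀ ρ ∈ Pss, ∀ σ ∈ Pss, nw ((L0 ^ n) (ρ - σ)) ≤ a n * ns (ρ - σ)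
  fixed : ∀ δ : ℝ, 0 ≤ δ → δ ≤ δhat → μ δ ∈ Pss ∧ L δ (μ δ) (μ δ) = μ δ
  nss_le : ∀ δ : ℝ, 0 ≤ δ → δ ≤ δhat → nss (μ δ) ≤ M

namespace WeakCouplingFamily

variable {E : Type*} [AddCommGroup E] [Module ℝ E] (H : WeakCouplingFamily E) {δ : ℝ}

theorem pss_subset_bs : H.Pss ⊆ H.Bs := fun _ hρ => H.bss_le_bs (H.pss_subset_bss hρ)

theorem sub_mem_bs {ρ σ : E} (hρ : ρ ∈ H.Pss) (hσ : σ ∈ H.Pss) : ρ - σ ∈ H.Bs :=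
  H.Bs.sub_mem (H.pss_subset_bs hρ) (H.pss_subset_bs hσ)

theorem isSeminormOn_nw_bs : IsSeminormOn H.Bs H.nw :=
  H.isSeminormOn_nw.mono H.bs_le_bw

theorem μ_mem (hδ0 : 0 ≤ δ) (hδ : δ ≤ H.δhat) : H.μ δ ∈ H.Pss := (H.fixed δ hδ0 hδ).1

theorem ns_μ_le (hδ0 : 0 ≤ δ) (hδ : δ ≤ H.δhat) : H.ns (H.μ δ) ≤ H.M :=
  (H.ns_le_nss _ (H.pss_subset_bss (H.μ_mem hδ0 hδ))).trans (H.nss_le δ hδ0 hδ)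

theorem M_nonneg : 0 ≤ H.M :=
  (H.isSeminormOn_ns.nonneg (H.pss_subset_bs (H.μ_mem le_rfl H.δhat_pos.le))).trans
    (H.ns_μ_le le_rfl H.δhat_pos.le)

theorem Q_nonneg : 0 ≤ H.Q := by
  have hμ := H.μ_mem le_rfl H.δhat_pos.le
  exact (H.isSeminormOn_nw.nonneg (H.bs_le_bw (H.pss_subset_bs hμ))).trans
    (H.nw_le_Q _ (H.pss_subset_pw hμ))

theorem exists_L_zero_eq : ∃ ρ ∈ H.Pw, H.L 0 ρ = H.L0 :=
  have hμ := H.pss_subset_pw (H.μ_mem le_rfl H.δhat_pos.le)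
  ⟨_, hμ, H.L_zero _ hμ⟩

theorem mapsTo_L0 : Set.MapsTo H.L0 H.Bs H.Bs := by
  obtain ⟨ρ, hρ, hL⟩ := H.exists_L_zero_eq
  exact fun f hf => hL ▸ H.L_mem 0 le_rfl ρ hρ f hf

theorem L0_con1 {f : E} (hf : f ∈ H.Bs) :
    H.nw (H.L0 f) ≤ H.nw f ∧ H.ns (H.L0 f) ≤ H.lam * H.ns f + H.B * H.nw f := by
  obtain ⟨ρ, hρ, hL⟩ := H.exists_L_zero_eq
  exact hL ▸ H.con1 0 le_rfl H.δhat_pos.le ρ hρ f hf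

theorem L0_pow_mem {f : E} (hf : f ∈ H.Bs) (k : ℕ) : (H.L0 ^ k) f ∈ H.Bs := by
  rw [Module.End.pow_apply]
  exact H.mapsTo_L0.iterate k hf

theorem ns_L0_pow_le {f : E} (hf : f ∈ H.Bs) (k : ℕ) :
    H.ns ((H.L0 ^ k) f) ≤ (1 + H.B / (1 - H.lam)) * H.ns f := by
  have hw : ∀ i, H.nw (H.L0^[i] f) ≤ H.nw f := fun i => by
    simpa using iterate_le_pow_mul H.mapsTo_L0 zero_le_one
      (fun g hg => by simpa using (H.L0_con1 hg).1) hf i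
  have hLY := le_pow_mul_add_of_forall_le_mul_add (s := fun i => H.ns (H.L0^[i] f)) (n := k)
    H.lam_nonneg H.lam_lt_one H.B_nonneg (H.isSeminormOn_nw.nonneg (H.bs_le_bw hf))
    (fun i _ => by
      simpa only [Function.iterate_succ_apply'] using (H.L0_con1 (H.mapsTo_L0.iterate i hf)).2)
    (fun i _ => hw i)
  rw [Module.End.pow_apply]
  refine hLY.trans ?_
  simp only [Function.iterate_zero, id]
  have h1 : H.lam ^ k * H.ns f ≤ H.ns f :=
    mul_le_of_le_one_left (H.isSeminormOn_ns.nonneg hf) (pow_le_one₀ H.lam_nonneg H.lam_lt_one.le)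
  have h2 : H.B / (1 - H.lam) * H.nw f ≤ H.B / (1 - H.lam) * H.ns f :=
    mul_le_mul_of_nonneg_left (H.nw_le_ns f hf) (div_nonneg H.B_nonneg (by linarith [H.lam_lt_one]))
  linarith

theorem ns_selfConsistentMap_sub_le (hδ0 : 0 ≤ δ) (hδ : δ ≤ H.δhat) (hδ1 : δ ≤ 1) {ρ : E}
    (hρ : ρ ∈ H.Pss) :
    H.ns (selfConsistentMap (H.L δ) ρ - H.μ δ) ≤
      H.lam * H.ns (ρ - H.μ δ) + (H.B + H.K * H.M) * H.nw (ρ - H.μ δ) := by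
  obtain ⟨hμ, hfix⟩ := H.fixed δ hδ0 hδ
  have hρw := H.pss_subset_pw hρ
  have hLY := (H.con1 δ hδ0 hδ ρ hρw _ (H.sub_mem_bs hρ hμ)).2
  have hnss : δ * H.nss (H.μ δ) ≤ H.M := by
    have h0 : 0 ≤ H.nss (H.μ δ) := (H.isSeminormOn_ns.nonneg (H.pss_subset_bs hμ)).trans
      (H.ns_le_nss _ (H.pss_subset_bss hμ))
    exact (mul_le_of_le_one_left h0 hδ1).trans (H.nss_le δ hδ0 hδ)
  have hLip : H.ns (H.L δ ρ (H.μ δ) - H.L δ (H.μ δ) (H.μ δ)) ≤ H.K * H.M * H.nw (ρ - H.μ δ) :=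
    calc _ ≤ δ * H.K * H.nw (ρ - H.μ δ) * H.nss (H.μ δ) :=
          H.con2s δ hδ0 hδ ρ hρw _ (H.pss_subset_pw hμ) _ (H.pss_subset_bss hμ)
      _ = H.K * H.nw (ρ - H.μ δ) * (δ * H.nss (H.μ δ)) := by ring
      _ ≤ H.K * H.nw (ρ - H.μ δ) * H.M := mul_le_mul_of_nonneg_left hnss
          (mul_nonneg H.K_nonneg (H.isSeminormOn_nw_bs.nonneg (H.sub_mem_bs hρ hμ)))
      _ = H.K * H.M * H.nw (ρ - H.μ δ) := by ring
  have := H.isSeminormOn_ns.selfConsistentMap_sub_le hfix (H.L_mem δ hδ0 ρ hρw)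
    (H.pss_subset_bs hμ) (H.pss_subset_bs hρ)
  linarith

theorem nw_selfConsistentMap_sub_le (hδ0 : 0 ≤ δ) (hδ : δ ≤ H.δhat) {ρ : E} (hρ : ρ ∈ H.Pss) :
    H.nw (selfConsistentMap (H.L δ) ρ - H.μ δ) ≤ (1 + δ * H.K * H.M) * H.nw (ρ - H.μ δ) := by
  obtain ⟨hμ, hfix⟩ := H.fixed δ hδ0 hδ
  have hρw := H.pss_subset_pw hρ
  have hcontr := (H.con1 δ hδ0 hδ ρ hρw _ (H.sub_mem_bs hρ hμ)).1
  have hLip : H.nw (H.L δ ρ (H.μ δ) - H.L δ (H.μ δ) (H.μ δ)) ≤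
      δ * H.K * H.M * H.nw (ρ - H.μ δ) :=
    calc _ ≤ δ * H.K * H.nw (ρ - H.μ δ) * H.ns (H.μ δ) :=
          H.con2w δ hδ0 hδ ρ hρw _ (H.pss_subset_pw hμ) _ (H.pss_subset_bs hμ)
      _ ≤ δ * H.K * H.nw (ρ - H.μ δ) * H.M := mul_le_mul_of_nonneg_left (H.ns_μ_le hδ0 hδ)
          (mul_nonneg (mul_nonneg hδ0 H.K_nonneg)
            (H.isSeminormOn_nw_bs.nonneg (H.sub_mem_bs hρ hμ)))
      _ = δ * H.K * H.M * H.nw (ρ - H.μ δ) := by ring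
  have := H.isSeminormOn_nw_bs.selfConsistentMap_sub_le hfix (H.L_mem δ hδ0 ρ hρw)
    (H.pss_subset_bs hμ) (H.pss_subset_bs hρ)
  linarith

theorem ns_selfConsistentMap_sub_le_mul (hδ0 : 0 ≤ δ) (hδ : δ ≤ H.δhat) (hδ1 : δ ≤ 1)
    {ρ : E} (hρ : ρ ∈ H.Pss) :
    H.ns (selfConsistentMap (H.L δ) ρ - H.μ δ) ≤ (1 + (H.B + H.K * H.M)) * H.ns (ρ - H.μ δ) :=
  have hρμ := H.sub_mem_bs hρ (H.μ_mem hδ0 hδ)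
  le_one_add_mul_of_le_mul_add H.lam_lt_one.le
    (add_nonneg H.B_nonneg (mul_nonneg H.K_nonneg H.M_nonneg))
    (H.isSeminormOn_ns.nonneg hρμ) (H.nw_le_ns _ hρμ)
    (H.ns_selfConsistentMap_sub_le hδ0 hδ hδ1 hρ)

theorem ns_iterate_sub_le (hδ0 : 0 ≤ δ) (hδ : δ ≤ H.δhat) (hδ1 : δ ≤ 1) {ρ : E}
    (hρ : ρ ∈ H.Pss) (k : ℕ) :
    H.ns ((selfConsistentMap (H.L δ))^[k] ρ - H.μ δ) ≤
      (1 + (H.B + H.K * H.M)) ^ k * H.ns (ρ - H.μ δ) :=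
  iterate_le_pow_mul (φ := fun x => H.ns (x - H.μ δ)) (H.mapsTo δ hδ0)
    (by linarith [H.B_nonneg, mul_nonneg H.K_nonneg H.M_nonneg])
    (fun _ hx => H.ns_selfConsistentMap_sub_le_mul hδ0 hδ hδ1 hx) hρ k

noncomputable def comparisonConst (k : ℕ) : ℝ :=
  ∑ i ∈ Finset.range k,
    H.K * (H.Q * (1 + H.B / (1 - H.lam)) + H.M * (1 + (H.B + H.K * H.M)) ^ i)

theorem comparisonConst_nonneg {k : ℕ} : 0 ≤ H.comparisonConst k := by
  have hC1 : 0 ≤ 1 + H.B / (1 - H.lam) :=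
    add_nonneg zero_le_one (div_nonneg H.B_nonneg (sub_pos.2 H.lam_lt_one).le)
  have hR : 0 ≤ 1 + (H.B + H.K * H.M) := by
    linarith [H.B_nonneg, mul_nonneg H.K_nonneg H.M_nonneg]
  exact Finset.sum_nonneg fun i _ => mul_nonneg H.K_nonneg (add_nonneg
    (mul_nonneg H.Q_nonneg hC1) (mul_nonneg H.M_nonneg (pow_nonneg hR i)))

theorem nw_iterate_sub_sub_L0_pow_le (hδ0 : 0 ≤ δ) (hδ : δ ≤ H.δhat) (hδ1 : δ ≤ 1) {ρ : E}
    (hρ : ρ ∈ H.Pss) (k : ℕ) :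
    H.nw ((selfConsistentMap (H.L δ))^[k] ρ - H.μ δ - (H.L0 ^ k) (ρ - H.μ δ)) ≤
      δ * H.comparisonConst k * H.ns (ρ - H.μ δ) := by
  obtain ⟨hμ, hfix⟩ := H.fixed δ hδ0 hδ
  have hv := H.sub_mem_bs hρ hμ
  have hδK : 0 ≤ δ * H.K := mul_nonneg hδ0 H.K_nonneg
  induction k with
  | zero => simp [comparisonConst, H.isSeminormOn_nw.map_zero]
  | succ k ih =>
    set σ := (selfConsistentMap (H.L δ))^[k] ρ
    set u := (H.L0 ^ k) (ρ - H.μ δ)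
    have hσ : σ ∈ H.Pss := (H.mapsTo δ hδ0).iterate k hρ
    have hσw := H.pss_subset_pw hσ
    have hu : u ∈ H.Bs := H.L0_pow_mem hv k
    have he : σ - H.μ δ - u ∈ H.Bs := H.Bs.sub_mem (H.sub_mem_bs hσ hμ) hu
    have hdecomp : (selfConsistentMap (H.L δ))^[k + 1] ρ - H.μ δ - (H.L0 ^ (k + 1)) (ρ - H.μ δ) =
        H.L δ σ (σ - H.μ δ - u) - (H.L0 u - H.L δ σ u) +
          (H.L δ σ (H.μ δ) - H.L δ (H.μ δ) (H.μ δ)) := by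
      rw [Function.iterate_succ_apply', pow_succ', Module.End.mul_apply, selfConsistentMap]
      simp only [map_sub (H.L δ σ), hfix]
      abel
    have h1 : H.nw (H.L δ σ (σ - H.μ δ - u)) ≤ δ * H.comparisonConst k * H.ns (ρ - H.μ δ) :=
      (H.con1 δ hδ0 hδ σ hσw _ he).1.trans ih
    have h2 : H.nw (H.L0 u - H.L δ σ u) ≤
        δ * H.K * H.Q * ((1 + H.B / (1 - H.lam)) * H.ns (ρ - H.μ δ)) :=
      (H.con2_L0 δ hδ0 hδ σ hσw u hu).trans (mul_le_mul
        (mul_le_mul_of_nonneg_left (H.nw_le_Q σ hσw) hδK) (H.ns_L0_pow_le hv k)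
        (H.isSeminormOn_ns.nonneg hu) (mul_nonneg hδK H.Q_nonneg))
    have h3 : H.nw (H.L δ σ (H.μ δ) - H.L δ (H.μ δ) (H.μ δ)) ≤
        δ * H.K * ((1 + (H.B + H.K * H.M)) ^ k * H.ns (ρ - H.μ δ)) * H.M := by
      have hgrowth : H.nw (σ - H.μ δ) ≤ (1 + (H.B + H.K * H.M)) ^ k * H.ns (ρ - H.μ δ) :=
        (H.nw_le_ns _ (H.sub_mem_bs hσ hμ)).trans (H.ns_iterate_sub_le hδ0 hδ hδ1 hρ k)
      calc _ ≤ δ * H.K * H.nw (σ - H.μ δ) * H.ns (H.μ δ) :=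
            H.con2w δ hδ0 hδ σ hσw _ (H.pss_subset_pw hμ) _ (H.pss_subset_bs hμ)
        _ ≤ _ := mul_le_mul (mul_le_mul_of_nonneg_left hgrowth hδK) (H.ns_μ_le hδ0 hδ)
            (H.isSeminormOn_ns.nonneg (H.pss_subset_bs hμ)) (mul_nonneg hδK
              ((H.isSeminormOn_nw_bs.nonneg (H.sub_mem_bs hσ hμ)).trans hgrowth))
    have hA : H.L δ σ (σ - H.μ δ - u) ∈ H.Bs := H.L_mem δ hδ0 σ hσw _ he
    have hD : H.L0 u - H.L δ σ u ∈ H.Bs :=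
      H.Bs.sub_mem (H.mapsTo_L0 hu) (H.L_mem δ hδ0 σ hσw u hu)
    have hC : H.L δ σ (H.μ δ) - H.L δ (H.μ δ) (H.μ δ) ∈ H.Bs :=
      H.Bs.sub_mem (H.L_mem δ hδ0 σ hσw _ (H.pss_subset_bs hμ))
        (H.L_mem δ hδ0 _ (H.pss_subset_pw hμ) _ (H.pss_subset_bs hμ))
    have htri := H.isSeminormOn_nw_bs.add_le _ (H.Bs.sub_mem hA hD) _ hC
    have htri' := H.isSeminormOn_nw_bs.sub_le hA hD
    have hsucc : H.comparisonConst (k + 1) = H.comparisonConst k +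
        H.K * (H.Q * (1 + H.B / (1 - H.lam)) + H.M * (1 + (H.B + H.K * H.M)) ^ k) :=
      Finset.sum_range_succ _ _
    rw [hdecomp, hsucc]
    linarith

theorem nw_iterate_sub_le (hδ0 : 0 ≤ δ) (hδ : δ ≤ H.δhat) (hδ1 : δ ≤ 1) {ρ : E}
    (hρ : ρ ∈ H.Pss) (k : ℕ) :
    H.nw ((selfConsistentMap (H.L δ))^[k] ρ - H.μ δ) ≤
      (H.a k + δ * H.comparisonConst k) * H.ns (ρ - H.μ δ) := by
  have hμ := H.μ_mem hδ0 hδ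
  have hv := H.sub_mem_bs hρ hμ
  have hcomp := H.nw_iterate_sub_sub_L0_pow_le hδ0 hδ hδ1 hρ k
  have hL0 := H.con3 k ρ hρ _ hμ
  have htri := H.isSeminormOn_nw_bs.add_le _
    (H.Bs.sub_mem (H.sub_mem_bs ((H.mapsTo δ hδ0).iterate k hρ) hμ) (H.L0_pow_mem hv k))
    _ (H.L0_pow_mem hv k)
  rw [sub_add_cancel] at htri
  linarith

theorem ns_iterate_add_sub_le_half (hδ0 : 0 ≤ δ) (hδ : δ ≤ H.δhat) (hδ1 : δ ≤ 1) {N₁ N : ℕ}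
    (hlamN : H.lam ^ N * (1 + (H.B + H.K * H.M)) ^ N₁ ≤ 1 / 4)
    (hg : (1 + δ * H.K * H.M) ^ N ≤ 2)
    (hη : 8 * (H.B + H.K * H.M) * (H.a N₁ + δ * H.comparisonConst N₁) ≤ 1 - H.lam)
    {ρ : E} (hρ : ρ ∈ H.Pss) :
    H.ns ((selfConsistentMap (H.L δ))^[N + N₁] ρ - H.μ δ) ≤ 2⁻¹ * H.ns (ρ - H.μ δ) := by
  have hμ := H.μ_mem hδ0 hδ
  have hb : 0 ≤ H.B + H.K * H.M := add_nonneg H.B_nonneg (mul_nonneg H.K_nonneg H.M_nonneg)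
  have hlam : 0 < 1 - H.lam := sub_pos.2 H.lam_lt_one
  have hη0 : 0 ≤ H.a N₁ + δ * H.comparisonConst N₁ :=
    add_nonneg (H.a_nonneg N₁) (mul_nonneg hδ0 H.comparisonConst_nonneg)
  have hblock := iterate_add_le_of_lasotaYorke (s := fun x => H.ns (x - H.μ δ))
    (w := fun x => H.nw (x - H.μ δ)) (H.mapsTo δ hδ0) H.lam_nonneg H.lam_lt_one hb
    (by linarith [mul_nonneg (mul_nonneg hδ0 H.K_nonneg) H.M_nonneg]) hη0
    (fun _ hx => H.isSeminormOn_nw_bs.nonneg (H.sub_mem_bs hx hμ))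
    (fun _ hx => H.nw_le_ns _ (H.sub_mem_bs hx hμ))
    (fun _ hx => H.ns_selfConsistentMap_sub_le hδ0 hδ hδ1 hx)
    (fun _ hx => H.nw_selfConsistentMap_sub_le hδ0 hδ hx)
    (fun _ hx => H.nw_iterate_sub_le hδ0 hδ hδ1 hx N₁) N hρ
  refine hblock.trans (mul_le_mul_of_nonneg_right ?_
    (H.isSeminormOn_ns.nonneg (H.sub_mem_bs hρ hμ)))
  have hcoef : (H.B + H.K * H.M) / (1 - H.lam) *
      ((1 + δ * H.K * H.M) ^ N * (H.a N₁ + δ * H.comparisonConst N₁)) ≤ 1 / 4 :=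
    calc _ ≤ (H.B + H.K * H.M) / (1 - H.lam) * (2 * (H.a N₁ + δ * H.comparisonConst N₁)) :=
          mul_le_mul_of_nonneg_left (mul_le_mul_of_nonneg_right hg hη0) (div_nonneg hb hlam.le)
      _ ≤ 1 / 4 := by
          rw [div_mul_eq_mul_div, div_le_iff₀ hlam]
          linarith
  linarith

theorem exists_exp_convergence :
    ∃ δbar : ℝ, 0 < δbar ∧ δbar < H.δhat ∧
      ∃ C γ : ℝ, 0 ≤ C ∧ 0 < γ ∧
        ∀ n : ℕ, ∀ δ : ℝ, 0 < δ → δ < δbar → ∀ ν ∈ H.Pss,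
          H.ns ((selfConsistentMap (H.L δ))^[n] ν - H.μ δ) ≤
            C * Real.exp (-γ * n) * H.ns (ν - H.μ δ) := by
  set b := H.B + H.K * H.M
  have hb : 0 ≤ b := add_nonneg H.B_nonneg (mul_nonneg H.K_nonneg H.M_nonneg)
  have hlam : 0 < 1 - H.lam := sub_pos.2 H.lam_lt_one
  obtain ⟨N₁, hN₁⟩ : ∃ N₁, 16 * b * H.a N₁ < 1 - H.lam :=
    ((H.tendsto_a.const_mul (16 * b)).eventually_lt_const (by simpa using hlam)).exists
  obtain ⟨N, hlamN, hN⟩ : ∃ N, H.lam ^ N * (1 + b) ^ N₁ < 1 / 4 ∧ 0 < N :=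
    (((tendsto_pow_atTop_nhds_zero_of_lt_one H.lam_nonneg H.lam_lt_one).mul_const
      ((1 + b) ^ N₁)).eventually_lt_const (by norm_num) |>.and (eventually_gt_atTop 0)).exists
  have hsmall : ∀ᶠ δ in nhds 0, δ < 1 ∧ (1 + δ * H.K * H.M) ^ N < 2 ∧
      16 * b * (δ * H.comparisonConst N₁) < 1 - H.lam := by
    refine (eventually_lt_nhds one_pos).and
      ((Continuous.tendsto (by fun_prop) 0).eventually_lt_const (by norm_num) |>.and
        ((Continuous.tendsto (by fun_prop) 0).eventually_lt_const ?_))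
    simpa using hlam
  obtain ⟨δbar, hδbar0, hδbar, hδbar_small⟩ :=
    exists_forall_of_eventually_nhds_zero hsmall H.δhat_pos
  refine ⟨δbar, hδbar0, hδbar, (1 + b) ^ (N + N₁) / 2⁻¹, Real.log 2⁻¹⁻¹ / (N + N₁ : ℕ),
    by positivity, div_pos (Real.log_pos (by norm_num)) (by positivity),
    fun n δ hδ0 hδ ν hν => ?_⟩
  obtain ⟨hδ1, hg, hc⟩ := hδbar_small δ hδ0 hδ
  have hδhat : δ ≤ H.δhat := by linarith
  exact le_mul_exp_of_iterate_le_mul (H.mapsTo δ hδ0.le) (by omega) (by linarith) (by norm_num)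
    (by norm_num) (fun _ hx => H.isSeminormOn_ns.nonneg (H.sub_mem_bs hx (H.μ_mem hδ0.le hδhat)))
    (fun _ hx => H.ns_selfConsistentMap_sub_le_mul hδ0.le hδhat hδ1.le hx)
    (fun _ hx => H.ns_iterate_add_sub_le_half hδ0.le hδhat hδ1.le hlamN.le hg.le (by linarith) hx)
    hν n

end WeakCouplingFamily

def probabilityMeasuresIn {X : Type*} [MeasurableSpace X] (V : Submodule ℝ (VectorMeasure X ℝ)) :
    Set (VectorMeasure X ℝ) :=
  {μ | μ ∈ V ∧ 0 ≤ μ ∧ μ Set.univ = 1}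

theorem probabilityMeasuresIn_mono {X : Type*} [MeasurableSpace X]
    {V W : Submodule ℝ (VectorMeasure X ℝ)} (hVW : V ≤ W) :
    probabilityMeasuresIn V ⊆ probabilityMeasuresIn W :=
  fun _ hμ => ⟨hVW hμ.1, hμ.2⟩

theorem mapsTo_selfConsistentMap_probabilityMeasuresIn {X : Type*} [MeasurableSpace X]
    {V : Submodule ℝ (VectorMeasure X ℝ)}
    {A : VectorMeasure X ℝ → VectorMeasure X ℝ →ₗ[ℝ] VectorMeasure X ℝ}
    (hA : ∀ ρ ∈ probabilityMeasuresIn V,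
      (∀ ν : VectorMeasure X ℝ, 0 ≤ ν → 0 ≤ A ρ ν) ∧
        ∀ ν : VectorMeasure X ℝ, A ρ ν Set.univ = ν Set.univ)
    (hV : ∀ ρ ∈ probabilityMeasuresIn V, ∀ f ∈ V, A ρ f ∈ V) :
    Set.MapsTo (selfConsistentMap A) (probabilityMeasuresIn V) (probabilityMeasuresIn V) :=
  fun ρ hρ => ⟨hV ρ hρ ρ hρ.1, (hA ρ hρ).1 ρ hρ.2.1, ((hA ρ hρ).2 ρ).trans hρ.2.2⟩

theorem stmt_6_general
    {X : Type*} [MeasurableSpace X]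
    -- the spaces `B_ss ⊆ B_s ⊆ B_w ⊆ SM(X)` with norms `nss ≥ ns ≥ nw`
    (Bw Bs Bss : Submodule ℝ (VectorMeasure X ℝ)) (hBsw : Bs ≤ Bw) (hBss : Bss ≤ Bs)
    (nw ns nss : VectorMeasure X ℝ → ℝ)
    (hnw_add : ∀ μ ∈ Bw, ∀ ν ∈ Bw, nw (μ + ν) ≤ nw μ + nw ν)
    (hnw_smul : ∀ (c : ℝ), ∀ μ ∈ Bw, nw (c • μ) = |c| * nw μ)
    (hns_add : ∀ μ ∈ Bs, ∀ ν ∈ Bs, ns (μ + ν) ≤ ns μ + ns ν)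
    (hns_smul : ∀ (c : ℝ), ∀ μ ∈ Bs, ns (c • μ) = |c| * ns μ)
    (hsw : ∀ μ ∈ Bs, nw μ ≤ ns μ) (hsss : ∀ μ ∈ Bss, ns μ ≤ nss μ)
    -- the sets of probability measures, with `P_w` bounded in `B_w`
    (Pw Pss : Set (VectorMeasure X ℝ))
    (hPw : Pw = {μ : VectorMeasure X ℝ | μ ∈ Bw ∧ 0 ≤ μ ∧ μ Set.univ = 1})
    (hPss : Pss = {μ : VectorMeasure X ℝ | μ ∈ Bss ∧ 0 ≤ μ ∧ μ Set.univ = 1})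
    (Q : ℝ) (hQ : ∀ μ ∈ Pw, nw μ ≤ Q)
    -- the family of Markov operators `L_{δ,μ}`, bounded on each of the three spaces
    (L : ℝ → VectorMeasure X ℝ → (VectorMeasure X ℝ →ₗ[ℝ] VectorMeasure X ℝ))
    (hMarkov : ∀ δ : ℝ, 0 ≤ δ → ∀ μ ∈ Pw,
      (∀ ν : VectorMeasure X ℝ, 0 ≤ ν → 0 ≤ L δ μ ν) ∧
      (∀ ν : VectorMeasure X ℝ, (L δ μ ν) Set.univ = ν Set.univ))
    (hLs : ∀ δ : ℝ, 0 ≤ δ → ∀ μ ∈ Pw, ∀ f ∈ Bs, L δ μ f ∈ Bs)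
    (hLss : ∀ δ : ℝ, 0 ≤ δ → ∀ μ ∈ Pw, ∀ f ∈ Bss, L δ μ f ∈ Bss)
    -- (Con1), for some `δ̂ > 0`
    (δhat B lam : ℝ) (hδhat : 0 < δhat) (hB : 0 ≤ B) (hlam0 : 0 ≤ lam) (hlam : lam < 1)
    (hCon1 : ∀ δ : ℝ, 0 ≤ δ → δ ≤ δhat → ∀ μ ∈ Pw, ∀ f ∈ Bs,
      nw (L δ μ f) ≤ nw f ∧ ns (L δ μ f) ≤ lam * ns f + B * nw f)
    -- (Con2), with `L₀` the common operator `L_{0,μ}`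
    (K : ℝ) (hK : 1 ≤ K)
    (L0 : VectorMeasure X ℝ →ₗ[ℝ] VectorMeasure X ℝ)
    (hL0 : ∀ μ ∈ Pw, L 0 μ = L0)
    (hCon2w : ∀ δ : ℝ, 0 ≤ δ → δ ≤ δhat → ∀ μ ∈ Pw, ∀ ν ∈ Pw, ∀ f ∈ Bs,
      nw (L δ μ f - L δ ν f) ≤ δ * K * nw (μ - ν) * ns f)
    (hCon2s : ∀ δ : ℝ, 0 ≤ δ → δ ≤ δhat → ∀ μ ∈ Pw, ∀ ν ∈ Pw, ∀ f ∈ Bss,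
      ns (L δ μ f - L δ ν f) ≤ δ * K * nw (μ - ν) * nss f)
    (hCon2' : ∀ δ : ℝ, 0 ≤ δ → δ ≤ δhat → ∀ ν ∈ Pw, ∀ f ∈ Bs,
      nw (L0 f - L δ ν f) ≤ δ * K * nw ν * ns f)
    -- (Con3): convergence to equilibrium of `L₀`
    (aseq : ℕ → ℝ) (haseq0 : ∀ n, 0 ≤ aseq n) (haseq : Tendsto aseq atTop (nhds 0))
    (hCon3 : ∀ n : ℕ, ∀ v ∈ Bs, v Set.univ = (0:ℝ) → nw ((L0 ^ n) v) ≤ aseq n * ns v)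
    -- for each `δ ≤ δ̂` an invariant probability measure `μ_δ ∈ P_ss` of `𝓛_δ`,
    -- with `sup_{δ ≤ δ̂} ‖μ_δ‖_ss < +∞`
    (μinv : ℝ → VectorMeasure X ℝ)
    (hμinv : ∀ δ : ℝ, 0 ≤ δ → δ ≤ δhat → μinv δ ∈ Pss ∧ L δ (μinv δ) (μinv δ) = μinv δ)
    (Minv : ℝ) (hMinv : ∀ δ : ℝ, 0 ≤ δ → δ ≤ δhat → nss (μinv δ) ≤ Minv) :
    ∃ δbar : ℝ, 0 < δbar ∧ δbar < δhat ∧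
      ∃ Cc γ : ℝ, 0 ≤ Cc ∧ 0 < γ ∧
        ∀ n : ℕ, ∀ δ : ℝ, 0 < δ → δ < δbar → ∀ ν ∈ Pss,
          ns ((fun m : VectorMeasure X ℝ => L δ m m)^[n] ν - μinv δ)
            ≤ Cc * Real.exp (-γ * n) * ns (ν - μinv δ) := by
  subst hPw hPss
  let H : WeakCouplingFamily (VectorMeasure X ℝ) :=
    { Bw, Bs, Bss, nw, ns, nss, L, L0, δhat, lam, B, K, Q
      Pw := probabilityMeasuresIn Bw
      Pss := probabilityMeasuresIn Bss
      a := aseq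
      μ := μinv
      M := Minv
      bs_le_bw := hBsw
      bss_le_bs := hBss
      isSeminormOn_nw := ⟨hnw_add, hnw_smul⟩
      isSeminormOn_ns := ⟨hns_add, hns_smul⟩
      nw_le_ns := hsw
      ns_le_nss := hsss
      pss_subset_bss := fun _ hρ => hρ.1
      pss_subset_pw := probabilityMeasuresIn_mono (hBss.trans hBsw)
      nw_le_Q := hQ
      mapsTo := fun δ hδ => mapsTo_selfConsistentMap_probabilityMeasuresIn
        (fun ρ hρ => hMarkov δ hδ ρ (probabilityMeasuresIn_mono (hBss.trans hBsw) hρ))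
        (fun ρ hρ => hLss δ hδ ρ (probabilityMeasuresIn_mono (hBss.trans hBsw) hρ))
      L_mem := hLs
      δhat_pos := hδhat
      lam_nonneg := hlam0
      lam_lt_one := hlam
      B_nonneg := hB
      K_nonneg := zero_le_one.trans hK
      con1 := hCon1
      L_zero := hL0
      con2w := hCon2w
      con2s := hCon2s
      con2_L0 := hCon2'
      a_nonneg := haseq0
      tendsto_a := haseq
      con3 := fun n ρ hρ σ hσ => hCon3 n _ (Bs.sub_mem (hBss hρ.1) (hBss hσ.1)) (by
        rw [sub_apply, hρ.2.2, hσ.2.2, sub_self])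
      fixed := hμinv
      nss_le := hMinv }
  exact H.exists_exp_convergence

/-- Theorem `expco` of the paper: exponential convergence to equilibrium for
the self-consistent operator `𝓛_δ(μ) = L_{δ,μ}(μ)` in the weak coupling regime. -/
theorem stmt_6
    {X : Type*} [MeasurableSpace X] [MetricSpace X] [CompactSpace X] [BorelSpace X]
    -- the spaces `B_ss ⊆ B_s ⊆ B_w ⊆ SM(X)` with norms `nss ≥ ns ≥ nw`
    (Bw Bs Bss : Submodule ℝ (VectorMeasure X ℝ)) (hBsw : Bs ≤ Bw) (hBss : Bss ≤ Bs)
    (nw ns nss : VectorMeasure X ℝ → ℝ)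
    (hnw0 : ∀ μ ∈ Bw, 0 ≤ nw μ)
    (hnw_add : ∀ μ ∈ Bw, ∀ ν ∈ Bw, nw (μ + ν) ≤ nw μ + nw ν)
    (hnw_smul : ∀ (c : ℝ), ∀ μ ∈ Bw, nw (c • μ) = |c| * nw μ)
    (hns0 : ∀ μ ∈ Bs, 0 ≤ ns μ)
    (hns_add : ∀ μ ∈ Bs, ∀ ν ∈ Bs, ns (μ + ν) ≤ ns μ + ns ν)
    (hns_smul : ∀ (c : ℝ), ∀ μ ∈ Bs, ns (c • μ) = |c| * ns μ)
    (hnss0 : ∀ μ ∈ Bss, 0 ≤ nss μ)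
    (hnss_add : ∀ μ ∈ Bss, ∀ ν ∈ Bss, nss (μ + ν) ≤ nss μ + nss ν)
    (hnss_smul : ∀ (c : ℝ), ∀ μ ∈ Bss, nss (c • μ) = |c| * nss μ)
    (hsw : ∀ μ ∈ Bs, nw μ ≤ ns μ) (hsss : ∀ μ ∈ Bss, ns μ ≤ nss μ)
    -- the map `μ ↦ μ(X)` is `‖·‖_w`-continuous
    (Cm : ℝ) (hmass : ∀ μ ∈ Bw, |μ Set.univ| ≤ Cm * nw μ)
    -- the sets of probability measures, with `P_w` bounded in `B_w`
    (Pw Pss : Set (VectorMeasure X ℝ))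
    (hPw : Pw = {μ : VectorMeasure X ℝ | μ ∈ Bw ∧ 0 ≤ μ ∧ μ Set.univ = 1})
    (hPss : Pss = {μ : VectorMeasure X ℝ | μ ∈ Bss ∧ 0 ≤ μ ∧ μ Set.univ = 1})
    (Q : ℝ) (hQ0 : 0 ≤ Q) (hQ : ∀ μ ∈ Pw, nw μ ≤ Q)
    -- the family of Markov operators `L_{δ,μ}`, bounded on each of the three spaces
    (L : ℝ → VectorMeasure X ℝ → (VectorMeasure X ℝ →ₗ[ℝ] VectorMeasure X ℝ))
    (hMarkov : ∀ δ : ℝ, 0 ≤ δ → ∀ μ ∈ Pw,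
      (∀ ν : VectorMeasure X ℝ, 0 ≤ ν → 0 ≤ L δ μ ν) ∧
      (∀ ν : VectorMeasure X ℝ, (L δ μ ν) Set.univ = ν Set.univ))
    (hLw : ∀ δ : ℝ, 0 ≤ δ → ∀ μ ∈ Pw, ∀ f ∈ Bw, L δ μ f ∈ Bw)
    (hLs : ∀ δ : ℝ, 0 ≤ δ → ∀ μ ∈ Pw, ∀ f ∈ Bs, L δ μ f ∈ Bs)
    (hLss : ∀ δ : ℝ, 0 ≤ δ → ∀ μ ∈ Pw, ∀ f ∈ Bss, L δ μ f ∈ Bss)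
    -- (Con1), for some `δ̂ > 0`
    (δhat B lam : ℝ) (hδhat : 0 < δhat) (hB : 0 ≤ B) (hlam0 : 0 ≤ lam) (hlam : lam < 1)
    (hCon1 : ∀ δ : ℝ, 0 ≤ δ → δ ≤ δhat → ∀ μ ∈ Pw, ∀ f ∈ Bs,
      nw (L δ μ f) ≤ nw f ∧ ns (L δ μ f) ≤ lam * ns f + B * nw f)
    -- (Con2), with `L₀` the common operator `L_{0,μ}`
    (K : ℝ) (hK : 1 ≤ K)
    (L0 : VectorMeasure X ℝ →ₗ[ℝ] VectorMeasure X ℝ)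
    (hL0 : ∀ μ ∈ Pw, L 0 μ = L0)
    (hCon2w : ∀ δ : ℝ, 0 ≤ δ → δ ≤ δhat → ∀ μ ∈ Pw, ∀ ν ∈ Pw, ∀ f ∈ Bs,
      nw (L δ μ f - L δ ν f) ≤ δ * K * nw (μ - ν) * ns f)
    (hCon2s : ∀ δ : ℝ, 0 ≤ δ → δ ≤ δhat → ∀ μ ∈ Pw, ∀ ν ∈ Pw, ∀ f ∈ Bss,
      ns (L δ μ f - L δ ν f) ≤ δ * K * nw (μ - ν) * nss f)
    (hCon2' : ∀ δ : ℝ, 0 ≤ δ → δ ≤ δhat → ∀ ν ∈ Pw, ∀ f ∈ Bs,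
      nw (L0 f - L δ ν f) ≤ δ * K * nw ν * ns f)
    -- (Con3): convergence to equilibrium of `L₀`
    (aseq : ℕ → ℝ) (haseq0 : ∀ n, 0 ≤ aseq n) (haseq : Tendsto aseq atTop (nhds 0))
    (hCon3 : ∀ n : ℕ, ∀ v ∈ Bs, v Set.univ = (0:ℝ) → nw ((L0 ^ n) v) ≤ aseq n * ns v)
    -- `sup_{μ ∈ P_w, δ ≤ δ̂} ‖L_{δ,μ}‖_{B_ss→B_ss} < +∞`
    (Mss : ℝ)
    (hMss : ∀ δ : ℝ, 0 ≤ δ → δ ≤ δhat → ∀ μ ∈ Pw, ∀ f ∈ Bss, nss (L δ μ f) ≤ Mss * nss f)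
    -- for each `δ ≤ δ̂` an invariant probability measure `μ_δ ∈ P_ss` of `𝓛_δ`,
    -- with `sup_{δ ≤ δ̂} ‖μ_δ‖_ss < +∞`
    (μinv : ℝ → VectorMeasure X ℝ)
    (hμinv : ∀ δ : ℝ, 0 ≤ δ → δ ≤ δhat → μinv δ ∈ Pss ∧ L δ (μinv δ) (μinv δ) = μinv δ)
    (Minv : ℝ) (hMinv : ∀ δ : ℝ, 0 ≤ δ → δ ≤ δhat → nss (μinv δ) ≤ Minv) :
    ∃ δbar : ℝ, 0 < δbar ∧ δbar < δhat ∧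
      ∃ Cc γ : ℝ, 0 ≤ Cc ∧ 0 < γ ∧
        ∀ n : ℕ, ∀ δ : ℝ, 0 < δ → δ < δbar → ∀ ν ∈ Pss,
          ns ((fun m : VectorMeasure X ℝ => L δ m m)^[n] ν - μinv δ)
            ≤ Cc * Real.exp (-γ * n) * ns (ν - μinv δ) :=
  stmt_6_general Bw Bs Bss hBsw hBss nw ns nss hnw_add hnw_smul hns_add hns_smul hsw hsss Pw Pss hPw
    hPss Q hQ L hMarkov hLs hLss δhat B lam hδhat hB hlam0 hlam hCon1 K hK L0 hL0 hCon2w hCon2s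
    hCon2' aseq haseq0 haseq hCon3 μinv hμinv Minv hMinv
end

section
/- Let 𝓛_δ : B_i → B_i (i ∈ {ss, s, w}), δ ∈ [0, δ̄), be a family of nonlinear Markov operators, with 𝓛₀ linear and bounded on B_s. Suppose that for each δ ∈ [0, δ̄) there is a probability measure h_δ ∈ B_ss with 𝓛_δ(h_δ) = h_δ, and assume: (SS1) there is M ≥ 0 with ‖h_δ‖_ss ≤ M for all δ ∈ [0, δ̄); (SS2) there is a sequence a_n ≥ 0 with a_n → 0 such that ‖𝓛₀ⁿ g‖_s ≤ a_n ‖g‖_ss for all g ∈ V_ss := {μ ∈ B_ss : μ(X) = 0}; (SS3) there is K ≥ 0 such that, on B_{2M} := {x ∈ B_ss : ‖x‖_ss ≤ 2M}, the map 𝓛₀ − 𝓛_δ is Kδ-Lipschitz from (B_{2M}, ‖·‖_ss) to (B_s, ‖·‖_s) and (𝓛₀ − 𝓛_δ)(0) = 0. Then lim_{δ→0} ‖h_δ − h₀‖_s = 0. -/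
/-!
Put `g = h_δ - h₀` and `e = h_δ - 𝓛₀ h_δ = (𝓛_δ - 𝓛₀) h_δ`. The two fixed point equations give
`g = 𝓛₀ g + e`, hence `g = 𝓛₀ⁿ g + ∑_{k<n} 𝓛₀ᵏ e`. As `g` has zero mass, (SS2) bounds the first
term by `2 M aₙ`, while (SS3) applied to `h_δ` and `0` gives `‖e‖_s ≤ K M δ`. Thus
`‖g‖_s ≤ 2 M aₙ + (∑_{k<n} Cᵏ) K M δ` for every `n`: let `δ → 0`, then `n → ∞`.
-/

open MeasureTheory Filter Finset Topology

theorem Module.End.eq_pow_apply_add_sum_of_eq_add {R M : Type*} [Semiring R] [AddCommMonoid M]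
    [Module R M] (T : Module.End R M) {g e : M} (hg : g = T g + e) (n : ℕ) :
    g = (T ^ n) g + ∑ k ∈ range n, (T ^ k) e := by
  induction n with
  | zero => simp
  | succ n ih =>
    have hstep : (T ^ n) g = (T ^ (n + 1)) g + (T ^ n) e := by
      conv_lhs => rw [hg]
      rw [map_add, pow_succ, Module.End.mul_apply]
    conv_lhs => rw [ih, hstep]
    rw [sum_range_succ]
    abel

def Submodule.restrictSeminorm {E : Type*} [AddCommGroup E] [Module ℝ E] (S : Submodule ℝ E)
    (n : E → ℝ) (hadd : ∀ x ∈ S, ∀ y ∈ S, n (x + y) ≤ n x + n y)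
    (hsmul : ∀ c : ℝ, ∀ x ∈ S, n (c • x) = |c| * n x) : Seminorm ℝ S :=
  Seminorm.of (fun x => n x) (fun x y => hadd x x.2 y y.2) (fun c x => hsmul c x x.2)

@[simp]
theorem Submodule.restrictSeminorm_apply {E : Type*} [AddCommGroup E] [Module ℝ E]
    (S : Submodule ℝ E) (n : E → ℝ) (hadd : ∀ x ∈ S, ∀ y ∈ S, n (x + y) ≤ n x + n y)
    (hsmul : ∀ c : ℝ, ∀ x ∈ S, n (c • x) = |c| * n x) (x : S) :
    S.restrictSeminorm n hadd hsmul x = n x :=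
  rfl

namespace Seminorm

variable {E : Type*} [AddCommGroup E] [Module ℝ E] (p : Seminorm ℝ E) {T : Module.End ℝ E}
  {C : ℝ}

theorem apply_pow_le (hC : 0 ≤ C) (hT : ∀ x, p (T x) ≤ C * p x) (n : ℕ) (x : E) :
    p ((T ^ n) x) ≤ C ^ n * p x := by
  induction n with
  | zero => simp
  | succ n ih =>
    rw [pow_succ', Module.End.mul_apply, pow_succ', mul_assoc]
    exact (hT _).trans (mul_le_mul_of_nonneg_left ih hC)

theorem apply_sub_le_of_isFixedPt (hC : 0 ≤ C) (hT : ∀ x, p (T x) ≤ C * p x) {u u₀ : E}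
    (hu₀ : Function.IsFixedPt T u₀) (n : ℕ) :
    p (u - u₀) ≤ p ((T ^ n) (u - u₀)) + (∑ k ∈ range n, C ^ k) * p (u - T u) := by
  have hstep : u - u₀ = T (u - u₀) + (u - T u) := by
    rw [map_sub, hu₀.eq]
    abel
  calc p (u - u₀)
      = p ((T ^ n) (u - u₀) + ∑ k ∈ range n, (T ^ k) (u - T u)) := by
        rw [← T.eq_pow_apply_add_sum_of_eq_add hstep n]
    _ ≤ p ((T ^ n) (u - u₀)) + ∑ k ∈ range n, p ((T ^ k) (u - T u)) :=
        (map_add_le_add p _ _).trans (add_le_add_right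
          (le_sum_of_subadditive p (map_zero p).le (map_add_le_add p) _ _) _)
    _ ≤ p ((T ^ n) (u - u₀)) + (∑ k ∈ range n, C ^ k) * p (u - T u) := by
        rw [sum_mul]
        gcongr with k
        exact p.apply_pow_le hC hT k _

end Seminorm

theorem tendsto_nhdsWithin_zero_of_le_mul_add_mul {f : ℝ → ℝ} {s : Set ℝ} {a b : ℕ → ℝ}
    (A : ℝ) (ha : Tendsto a atTop (𝓝 0)) (hf₀ : ∀ δ ∈ s, 0 ≤ f δ)
    (hf : ∀ δ ∈ s, ∀ n, f δ ≤ a n * A + b n * δ) : Tendsto f (𝓝[s] 0) (𝓝 0) := by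
  refine tendsto_order.2 ⟨fun ε hε => ?_, fun ε hε => ?_⟩
  · filter_upwards [self_mem_nhdsWithin] with δ hδ using hε.trans_le (hf₀ δ hδ)
  · have haA : Tendsto (fun n => a n * A) atTop (𝓝 0) := by simpa using ha.mul_const A
    obtain ⟨n, hn⟩ := (haA.eventually (gt_mem_nhds (half_pos hε))).exists
    have hb : Tendsto (fun δ => b n * δ) (𝓝[s] 0) (𝓝 0) := by
      simpa using ((continuous_const_mul (b n)).tendsto 0).mono_left nhdsWithin_le_nhds
    filter_upwards [self_mem_nhdsWithin, hb.eventually (gt_mem_nhds (half_pos hε))]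
      with δ hδ hbδ
    linarith [hf δ hδ n]

theorem stmt_7_general
    {X : Type*} [MeasurableSpace X]
    -- the spaces `B_ss ⊆ B_s ⊆ B_w ⊆ SM(X)` with norms `nss ≥ ns ≥ nw`
    (Bw Bs Bss : Submodule ℝ (VectorMeasure X ℝ)) (hBss : Bss ≤ Bs)
    (ns nss : VectorMeasure X ℝ → ℝ)
    (hns_add : ∀ μ ∈ Bs, ∀ ν ∈ Bs, ns (μ + ν) ≤ ns μ + ns ν)
    (hns_smul : ∀ (c : ℝ), ∀ μ ∈ Bs, ns (c • μ) = |c| * ns μ)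
    (hnss_add : ∀ μ ∈ Bss, ∀ ν ∈ Bss, nss (μ + ν) ≤ nss μ + nss ν)
    (hnss_smul : ∀ (c : ℝ), ∀ μ ∈ Bss, nss (c • μ) = |c| * nss μ)
    -- the family of nonlinear Markov operators `𝓛_δ`, `δ ∈ [0, δ̄)`
    (δbar : ℝ) (hδbar : 0 < δbar)
    (L : ℝ → VectorMeasure X ℝ → VectorMeasure X ℝ)
    (hLmaps : ∀ δ : ℝ, 0 ≤ δ → δ < δbar →
      Set.MapsTo (L δ) Bw Bw ∧ Set.MapsTo (L δ) Bs Bs ∧ Set.MapsTo (L δ) Bss Bss)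
    -- `𝓛₀` is linear and bounded on `B_s`
    (L0 : VectorMeasure X ℝ →ₗ[ℝ] VectorMeasure X ℝ) (hL0 : ∀ μ, L 0 μ = L0 μ)
    (CL : ℝ) (hL0bdd : ∀ f ∈ Bs, ns (L0 f) ≤ CL * ns f)
    -- for each `δ` a fixed probability measure `h_δ ∈ B_ss` of `𝓛_δ`
    (hfix : ℝ → VectorMeasure X ℝ)
    (hhfix : ∀ δ : ℝ, 0 ≤ δ → δ < δbar →
      hfix δ ∈ Bss ∧ 0 ≤ hfix δ ∧ (hfix δ) Set.univ = (1:ℝ) ∧ L δ (hfix δ) = hfix δ)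
    -- (SS1): uniform regularity bound
    (M : ℝ) (hSS1 : ∀ δ : ℝ, 0 ≤ δ → δ < δbar → nss (hfix δ) ≤ M)
    -- (SS2): convergence to equilibrium for the unperturbed operator
    (aseq : ℕ → ℝ) (haseq0 : ∀ n, 0 ≤ aseq n) (haseq : Tendsto aseq atTop (nhds 0))
    (hSS2 : ∀ n : ℕ, ∀ g ∈ Bss, g Set.univ = (0:ℝ) → ns ((L0 ^ n) g) ≤ aseq n * nss g)
    -- (SS3): `𝓛₀ − 𝓛_δ` is `Kδ`-Lipschitz from `(B_{2M}, ‖·‖_ss)` to `(B_s, ‖·‖_s)`,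
    -- and `(𝓛₀ − 𝓛_δ)(0) = 0`
    (K : ℝ) (hK0 : 0 ≤ K)
    (hSS3 : ∀ δ : ℝ, 0 ≤ δ → δ < δbar →
      ∀ x y : VectorMeasure X ℝ, x ∈ Bss → nss x ≤ 2 * M → y ∈ Bss → nss y ≤ 2 * M →
        ns ((L0 x - L δ x) - (L0 y - L δ y)) ≤ K * δ * nss (x - y))
    (hSS3zero : ∀ δ : ℝ, 0 ≤ δ → δ < δbar → L0 (0 : VectorMeasure X ℝ) - L δ 0 = 0) :
    Tendsto (fun δ : ℝ => ns (hfix δ - hfix 0))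
      (nhdsWithin 0 (Set.Ico 0 δbar)) (nhds 0) := by
  obtain ⟨h₀_mem, -, h₀_mass, h₀_fix⟩ := hhfix 0 le_rfl hδbar
  set ps := Bs.restrictSeminorm ns hns_add hns_smul
  set pss := Bss.restrictSeminorm nss hnss_add hnss_smul
  have hM : 0 ≤ M := (apply_nonneg pss ⟨_, h₀_mem⟩).trans (hSS1 0 le_rfl hδbar)
  have hBs : ∀ μ ∈ Bs, L0 μ ∈ Bs := fun μ hμ => hL0 μ ▸ (hLmaps 0 le_rfl hδbar).2.1 hμ
  have hT : ∀ μ : Bs, ps (L0.restrict hBs μ) ≤ max CL 0 * ps μ := fun μ =>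
    (hL0bdd μ μ.2).trans (mul_le_mul_of_nonneg_right (le_max_left _ _) (apply_nonneg ps μ))
  refine tendsto_nhdsWithin_zero_of_le_mul_add_mul (2 * M) haseq
    (fun δ ⟨hδ0, hδlt⟩ => apply_nonneg ps ⟨_, hBss (Bss.sub_mem (hhfix δ hδ0 hδlt).1 h₀_mem)⟩)
    (b := fun n => (∑ k ∈ range n, max CL 0 ^ k) * (K * M)) fun δ ⟨hδ0, hδlt⟩ n => ?_
  obtain ⟨h_mem, -, h_mass, h_fix⟩ := hhfix δ hδ0 hδlt
  have hdiff : nss (hfix δ - hfix 0) ≤ 2 * M := by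
    have htri := map_sub_le_add pss ⟨_, h_mem⟩ ⟨_, h₀_mem⟩
    simp only [pss, Submodule.restrictSeminorm_apply, Submodule.coe_sub] at htri
    linarith [hSS1 δ hδ0 hδlt, hSS1 0 le_rfl hδbar]
  have hdecay : ns ((L0 ^ n) (hfix δ - hfix 0)) ≤ aseq n * (2 * M) := by
    refine (hSS2 n _ (Bss.sub_mem h_mem h₀_mem) ?_).trans
      (mul_le_mul_of_nonneg_left hdiff (haseq0 n))
    rw [sub_apply, h_mass, h₀_mass, sub_self]
  have hdefect : ns (hfix δ - L0 (hfix δ)) ≤ K * M * δ := by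
    have hlip := hSS3 δ hδ0 hδlt _ 0 h_mem (by linarith [hSS1 δ hδ0 hδlt]) Bss.zero_mem
      (by rw [show nss 0 = 0 from map_zero pss]; linarith)
    rw [hSS3zero δ hδ0 hδlt, sub_zero, sub_zero, h_fix] at hlip
    have hrev := map_sub_rev ps ⟨_, hBss h_mem⟩ ⟨_, hBs _ (hBss h_mem)⟩
    simp only [ps, Submodule.restrictSeminorm_apply, Submodule.coe_sub] at hrev
    calc ns (hfix δ - L0 (hfix δ)) ≤ K * δ * nss (hfix δ) := hrev ▸ hlip
      _ ≤ K * δ * M := mul_le_mul_of_nonneg_left (hSS1 δ hδ0 hδlt) (mul_nonneg hK0 hδ0)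
      _ = K * M * δ := by ring
  have hbound := ps.apply_sub_le_of_isFixedPt (le_max_right CL 0) hT
    (u := ⟨_, hBss h_mem⟩) (u₀ := ⟨_, hBss h₀_mem⟩) (Subtype.ext ((hL0 _).symm.trans h₀_fix)) n
  rw [Module.End.pow_restrict] at hbound
  simp only [ps, Submodule.restrictSeminorm_apply, LinearMap.coe_restrict_apply,
    Submodule.coe_sub] at hbound
  refine hbound.trans ?_
  rw [mul_assoc _ (K * M)]
  gcongr

/-- Theorem `ss` of the paper: statistical stability for a family of
nonlinear Markov operators `𝓛_δ` which is a small (nonlinear) perturbation of a linear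
Markov operator `𝓛₀`. -/
theorem stmt_7
    {X : Type*} [MeasurableSpace X] [MetricSpace X] [CompactSpace X] [BorelSpace X]
    -- the spaces `B_ss ⊆ B_s ⊆ B_w ⊆ SM(X)` with norms `nss ≥ ns ≥ nw`
    (Bw Bs Bss : Submodule ℝ (VectorMeasure X ℝ)) (hBsw : Bs ≤ Bw) (hBss : Bss ≤ Bs)
    (nw ns nss : VectorMeasure X ℝ → ℝ)
    (hnw0 : ∀ μ ∈ Bw, 0 ≤ nw μ)
    (hnw_add : ∀ μ ∈ Bw, ∀ ν ∈ Bw, nw (μ + ν) ≤ nw μ + nw ν)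
    (hnw_smul : ∀ (c : ℝ), ∀ μ ∈ Bw, nw (c • μ) = |c| * nw μ)
    (hns0 : ∀ μ ∈ Bs, 0 ≤ ns μ)
    (hns_add : ∀ μ ∈ Bs, ∀ ν ∈ Bs, ns (μ + ν) ≤ ns μ + ns ν)
    (hns_smul : ∀ (c : ℝ), ∀ μ ∈ Bs, ns (c • μ) = |c| * ns μ)
    (hnss0 : ∀ μ ∈ Bss, 0 ≤ nss μ)
    (hnss_add : ∀ μ ∈ Bss, ∀ ν ∈ Bss, nss (μ + ν) ≤ nss μ + nss ν)
    (hnss_smul : ∀ (c : ℝ), ∀ μ ∈ Bss, nss (c • μ) = |c| * nss μ)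
    (hsw : ∀ μ ∈ Bs, nw μ ≤ ns μ) (hsss : ∀ μ ∈ Bss, ns μ ≤ nss μ)
    -- the linear form `μ ↦ μ(X)` is continuous on `B_w` (hence on each `B_i`)
    (Cm : ℝ) (hmass : ∀ μ ∈ Bw, |μ Set.univ| ≤ Cm * nw μ)
    -- the family of nonlinear Markov operators `𝓛_δ`, `δ ∈ [0, δ̄)`
    (δbar : ℝ) (hδbar : 0 < δbar)
    (L : ℝ → VectorMeasure X ℝ → VectorMeasure X ℝ)
    (hMarkov : ∀ δ : ℝ, 0 ≤ δ → δ < δbar →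
      (∀ μ : VectorMeasure X ℝ, 0 ≤ μ → 0 ≤ L δ μ) ∧
      (∀ μ : VectorMeasure X ℝ, (L δ μ) Set.univ = μ Set.univ))
    (hLmaps : ∀ δ : ℝ, 0 ≤ δ → δ < δbar →
      Set.MapsTo (L δ) Bw Bw ∧ Set.MapsTo (L δ) Bs Bs ∧ Set.MapsTo (L δ) Bss Bss)
    -- `𝓛₀` is linear and bounded on `B_s`
    (L0 : VectorMeasure X ℝ →ₗ[ℝ] VectorMeasure X ℝ) (hL0 : ∀ μ, L 0 μ = L0 μ)
    (CL : ℝ) (hL0bdd : ∀ f ∈ Bs, ns (L0 f) ≤ CL * ns f)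
    -- for each `δ` a fixed probability measure `h_δ ∈ B_ss` of `𝓛_δ`
    (hfix : ℝ → VectorMeasure X ℝ)
    (hhfix : ∀ δ : ℝ, 0 ≤ δ → δ < δbar →
      hfix δ ∈ Bss ∧ 0 ≤ hfix δ ∧ (hfix δ) Set.univ = (1:ℝ) ∧ L δ (hfix δ) = hfix δ)
    -- (SS1): uniform regularity bound
    (M : ℝ) (hSS1 : ∀ δ : ℝ, 0 ≤ δ → δ < δbar → nss (hfix δ) ≤ M)
    -- (SS2): convergence to equilibrium for the unperturbed operator
    (aseq : ℕ → ℝ) (haseq0 : ∀ n, 0 ≤ aseq n) (haseq : Tendsto aseq atTop (nhds 0))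
    (hSS2 : ∀ n : ℕ, ∀ g ∈ Bss, g Set.univ = (0:ℝ) → ns ((L0 ^ n) g) ≤ aseq n * nss g)
    -- (SS3): `𝓛₀ − 𝓛_δ` is `Kδ`-Lipschitz from `(B_{2M}, ‖·‖_ss)` to `(B_s, ‖·‖_s)`,
    -- and `(𝓛₀ − 𝓛_δ)(0) = 0`
    (K : ℝ) (hK0 : 0 ≤ K)
    (hSS3 : ∀ δ : ℝ, 0 ≤ δ → δ < δbar →
      ∀ x y : VectorMeasure X ℝ, x ∈ Bss → nss x ≤ 2 * M → y ∈ Bss → nss y ≤ 2 * M →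
        ns ((L0 x - L δ x) - (L0 y - L δ y)) ≤ K * δ * nss (x - y))
    (hSS3zero : ∀ δ : ℝ, 0 ≤ δ → δ < δbar → L0 (0 : VectorMeasure X ℝ) - L δ 0 = 0) :
    Tendsto (fun δ : ℝ => ns (hfix δ - hfix 0))
      (nhdsWithin 0 (Set.Ico 0 δbar)) (nhds 0) :=
  stmt_7_general Bw Bs Bss hBss ns nss hns_add hns_smul hnss_add hnss_smul δbar hδbar L hLmaps L0
    hL0 CL hL0bdd hfix hhfix M hSS1 aseq haseq0 haseq hSS2 K hK0 hSS3 hSS3zero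
end

section
/- Let k ≥ 1 and let L₀ and L₁ be the annealed transfer operators of systems with additive noise having the same noise kernel ρ and deterministic parts given by continuous maps T₀ and T₁, i.e. (L_i f)(x) = ∫_{𝕊¹} ρ̃(x − T_i(y)) f(y) dy (i = 0, 1). Then there is C ≥ 0 (independent of T₀, T₁, ρ, f) such that for all such T₀, T₁ and all f ∈ L¹(𝕊¹): ‖L₁ f − L₀ f‖_{C^{k−1}} ≤ C ‖ρ‖_{C^k} ‖T₀ − T₁‖_{C⁰} ‖f‖_{L¹}, where ‖T₀ − T₁‖_{C⁰} := sup_{y∈𝕊¹} d(T₀(y), T₁(y)) with d the circle distance. -/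
noncomputable section
open MeasureTheory Set Filter

/-- The periodization `ρ̃(x) = Σ_{m∈ℤ} ρ(x+m)` of a Schwartz function `ρ`. -/
def periodize (ρ : SchwartzMap ℝ ℝ) (x : ℝ) : ℝ := ∑' m : ℤ, ρ (x + (m : ℝ))

/-- The annealed transfer operator of a system with additive noise:
`(L f)(x) = ∫_{𝕊¹} ρ̃(x − T(y)) f(y) dy` (circle functions are represented by `1`-periodic
functions on `ℝ`, integration over `𝕊¹` by integration over `(0,1]`). -/
def annealedOp (ρ : SchwartzMap ℝ ℝ) (T : ℝ → ℝ) (f : ℝ → ℝ) (x : ℝ) : ℝ :=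
  ∫ y in Ioc (0:ℝ) 1, periodize ρ (x - T y) * f y

/-- The `C^k` norm `max_{0≤j≤k} sup_x |g^{(j)}(x)|`. -/
def CkNorm (k : ℕ) (g : ℝ → ℝ) : ℝ :=
  ⨆ j ∈ Finset.range (k + 1), ⨆ x : ℝ, |iteratedDeriv j g x|

/-!
Differentiating under the integral sign,
`(L₁f − L₀f)⁽ʲ⁾(x) = ∫ (ρ̃⁽ʲ⁾(x − T₁ y) − ρ̃⁽ʲ⁾(x − T₀ y)) f(y) dy`.
As `ρ̃⁽ʲ⁾` is `1`-periodic, the mean value theorem along the shortest lift of `T₀ y − T₁ y`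
bounds the kernel difference by `sup |ρ̃⁽ʲ⁺¹⁾| · d(T₀ y, T₁ y)`, and `j + 1 ≤ k`; so `C = 1` works.
-/

open scoped SchwartzMap

lemma SchwartzMap.summable_norm_restrict_comp_addRight (φ : 𝓢(ℝ, ℝ))
    (K : TopologicalSpace.Compacts ℝ) :
    Summable fun n : ℤ => ‖(φ.toContinuousMap.comp (ContinuousMap.addRight (n : ℝ))).restrict K‖ :=
  summable_of_isBigO (Real.summable_abs_int_rpow one_lt_two)
    ((isBigO_norm_restrict_cocompact _ two_pos (φ.isBigO_cocompact_rpow (-2)) K).comp_tendsto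
      Int.tendsto_coe_cofinite)

lemma SchwartzMap.exists_summable_bound_comp_add_int (φ : 𝓢(ℝ, ℝ)) (x₀ : ℝ) :
    ∃ u : ℤ → ℝ, Summable u ∧ ∀ (m : ℤ), ∀ x ∈ Metric.ball x₀ 1, ‖φ (x + m)‖ ≤ u m := by
  let K : TopologicalSpace.Compacts ℝ := ⟨Metric.closedBall x₀ 1, isCompact_closedBall x₀ 1⟩
  refine ⟨_, φ.summable_norm_restrict_comp_addRight K, fun m x hx => ?_⟩
  exact ContinuousMap.norm_coe_le_norm
    ((φ.toContinuousMap.comp (ContinuousMap.addRight (m : ℝ))).restrict K)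
    ⟨x, Metric.ball_subset_closedBall hx⟩

lemma summable_periodize (φ : 𝓢(ℝ, ℝ)) (x : ℝ) : Summable fun m : ℤ => φ (x + m) := by
  obtain ⟨u, hu, hbound⟩ := φ.exists_summable_bound_comp_add_int x
  exact .of_norm_bounded hu fun m => hbound m x (Metric.mem_ball_self one_pos)

lemma hasDerivAt_periodize (φ : 𝓢(ℝ, ℝ)) (x : ℝ) :
    HasDerivAt (periodize φ) (periodize (SchwartzMap.derivCLM ℝ ℝ φ) x) x := by
  obtain ⟨u, hu, hbound⟩ := (SchwartzMap.derivCLM ℝ ℝ φ).exists_summable_bound_comp_add_int x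
  refine hasDerivAt_tsum_of_isPreconnected hu Metric.isOpen_ball (convex_ball x 1).isPreconnected
    (fun m y _ => ?_) (fun m y hy => hbound m y hy) (Metric.mem_ball_self one_pos)
    (summable_periodize φ x) (Metric.mem_ball_self one_pos)
  simpa [Function.comp_def] using
    (φ.hasFDerivAt (y + m)).hasDerivAt.comp y ((hasDerivAt_id y).add_const (m : ℝ))

lemma periodic_periodize (φ : 𝓢(ℝ, ℝ)) : Function.Periodic (periodize φ) 1 := by
  intro x
  simp only [periodize]
  rw [← (Equiv.addRight (1 : ℤ)).tsum_eq fun m : ℤ => φ (x + m)]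
  simp only [Equiv.coe_addRight, Int.cast_add, Int.cast_one, add_assoc, add_comm (1 : ℝ)]

lemma exists_iteratedDeriv_periodize_eq (φ : 𝓢(ℝ, ℝ)) (j : ℕ) :
    ∃ ψ : 𝓢(ℝ, ℝ), iteratedDeriv j (periodize φ) = periodize ψ := by
  induction j with
  | zero => exact ⟨φ, rfl⟩
  | succ j ih =>
    obtain ⟨ψ, hψ⟩ := ih
    exact ⟨SchwartzMap.derivCLM ℝ ℝ ψ, by
      rw [iteratedDeriv_succ, hψ]; exact funext fun x => (hasDerivAt_periodize ψ x).deriv⟩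

section IteratedDeriv
variable (φ : 𝓢(ℝ, ℝ)) (i : ℕ)

lemma hasDerivAt_iteratedDeriv_periodize (x : ℝ) :
    HasDerivAt (iteratedDeriv i (periodize φ)) (iteratedDeriv (i + 1) (periodize φ) x) x := by
  obtain ⟨ψ, hψ⟩ := exists_iteratedDeriv_periodize_eq φ i
  rw [iteratedDeriv_succ, hψ]
  exact (hasDerivAt_periodize ψ x).differentiableAt.hasDerivAt

lemma continuous_iteratedDeriv_periodize : Continuous (iteratedDeriv i (periodize φ)) :=
  continuous_iff_continuousAt.2 fun x => (hasDerivAt_iteratedDeriv_periodize φ i x).continuousAt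

lemma periodic_iteratedDeriv_periodize : Function.Periodic (iteratedDeriv i (periodize φ)) 1 := by
  obtain ⟨ψ, hψ⟩ := exists_iteratedDeriv_periodize_eq φ i
  exact hψ ▸ periodic_periodize ψ

lemma bddAbove_abs_iteratedDeriv_periodize :
    BddAbove (Set.range fun x => |iteratedDeriv i (periodize φ) x|) := by
  obtain ⟨C, hC⟩ := ((periodic_iteratedDeriv_periodize φ i).isBounded_of_continuous one_ne_zero
    (continuous_iteratedDeriv_periodize φ i)).exists_norm_le
  exact ⟨C, by rintro _ ⟨x, rfl⟩; exact hC _ ⟨x, rfl⟩⟩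

end IteratedDeriv

lemma iSup_abs_iteratedDeriv_le_CkNorm {k j : ℕ} (hj : j ≤ k) (g : ℝ → ℝ) :
    ⨆ x, |iteratedDeriv j g x| ≤ CkNorm k g := by
  have hfin := ((Finset.range (k + 1)).finite_toSet.image
    fun i => ⨆ x, |iteratedDeriv i g x|).bddAbove
  refine le_ciSup₂ (f := fun i (_ : i ∈ Finset.range (k + 1)) => ⨆ x, |iteratedDeriv i g x|)
    (hfin.mono ?_) j (Finset.mem_range.2 (Nat.lt_succ_of_le hj))
  intro a ha
  simp only [Set.mem_iUnion, Set.mem_range] at ha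
  obtain ⟨i, hi, rfl⟩ := ha
  exact ⟨i, hi, rfl⟩

lemma AddCircle.norm_le_iSup_norm {ι : Type*} {p : ℝ} (hp : p ≠ 0) (h : ι → AddCircle p)
    (i : ι) : ‖h i‖ ≤ ⨆ j, ‖h j‖ :=
  le_ciSup ⟨|p| / 2, by rintro _ ⟨j, rfl⟩; exact AddCircle.norm_le_half_period (x := h j) p hp⟩ i

lemma abs_sub_le_mul_norm_addCircle {g g' : ℝ → ℝ} (hg : ∀ x, HasDerivAt g (g' x) x)
    (hper : Function.Periodic g 1) {M : ℝ} (hM : ∀ x, |g' x| ≤ M) (x a b : ℝ) :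
    |g (x - b) - g (x - a)| ≤ M * ‖(a : AddCircle (1 : ℝ)) - b‖ := by
  set n := round (a - b)
  have hshift : g (x - a) = g (x - a + n) := by simpa using (hper.int_mul n (x - a)).symm
  have hnorm : ‖(a : AddCircle (1 : ℝ)) - b‖ = |a - b - n| := by
    rw [← AddCircle.coe_sub, AddCircle.norm_eq]; norm_num [n]
  rw [hshift, hnorm, ← Real.norm_eq_abs]
  calc ‖g (x - b) - g (x - a + n)‖ ≤ M * ‖(x - b) - (x - a + n)‖ :=
        Convex.norm_image_sub_le_of_norm_hasDerivWithin_le (fun y _ => (hg y).hasDerivWithinAt)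
          (fun y _ => hM y) convex_univ (Set.mem_univ _) (Set.mem_univ _)
    _ = M * |a - b - n| := by rw [Real.norm_eq_abs]; congr 2; ring

section ParametricIntegral

variable {α : Type*} [MeasurableSpace α] {μ : Measure α}

lemma abs_integral_mul_le_of_abs_le {G f : α → ℝ} {B : ℝ} (hG : ∀ y, |G y| ≤ B)
    (hf : Integrable f μ) : |∫ y, G y * f y ∂μ| ≤ B * ∫ y, |f y| ∂μ :=
  calc |∫ y, G y * f y ∂μ| ≤ ∫ y, |G y * f y| ∂μ := abs_integral_le_integral_abs
    _ ≤ ∫ y, B * |f y| ∂μ := integral_mono_of_nonneg (ae_of_all _ fun _ => abs_nonneg _)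
        (hf.abs.const_mul B) (ae_of_all _ fun y => by
          simp only [abs_mul]; exact mul_le_mul_of_nonneg_right (hG y) (abs_nonneg _))
    _ = B * ∫ y, |f y| ∂μ := integral_const_mul _ _

lemma iteratedDeriv_integral_mul {G : ℕ → ℝ → α → ℝ} {f : α → ℝ} (hf : Integrable f μ)
    (hG_meas : ∀ i x, AEStronglyMeasurable (G i x) μ) (hG_bdd : ∀ i, ∃ C, ∀ x y, |G i x y| ≤ C)
    (hG_deriv : ∀ i x y, HasDerivAt (G i · y) (G (i + 1) x y) x) (j : ℕ) :
    iteratedDeriv j (fun x => ∫ y, G 0 x y * f y ∂μ) = fun x => ∫ y, G j x y * f y ∂μ := by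
  have hint : ∀ i x, Integrable (fun y => G i x y * f y) μ := fun i x => by
    obtain ⟨C, hC⟩ := hG_bdd i
    exact hf.bdd_mul (hG_meas i x) (ae_of_all _ (hC x))
  induction j with
  | zero => rfl
  | succ j ih =>
    rw [iteratedDeriv_succ, ih]
    funext x
    obtain ⟨C, hC⟩ := hG_bdd (j + 1)
    exact (hasDerivAt_integral_of_dominated_loc_of_deriv_le Filter.univ_mem
      (.of_forall fun x' => (hint j x').aestronglyMeasurable) (hint j x)
      (hint (j + 1) x).aestronglyMeasurable
      (ae_of_all _ fun y x' _ => by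
        rw [norm_mul]; exact mul_le_mul_of_nonneg_right (hC x' y) (norm_nonneg _))
      (hf.norm.const_mul C)
      (ae_of_all _ fun y x' _ => (hG_deriv j x' y).mul_const (f y))).2.deriv

end ParametricIntegral

lemma iteratedDeriv_annealedOp_sub (ρ : 𝓢(ℝ, ℝ)) {T₀ T₁ : ℝ → ℝ} (hT₀ : Measurable T₀)
    (hT₁ : Measurable T₁) {f : ℝ → ℝ} (hf : IntegrableOn f (Ioc 0 1)) (j : ℕ) :
    iteratedDeriv j (fun x => annealedOp ρ T₁ f x - annealedOp ρ T₀ f x) =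
      fun x => ∫ y in Ioc 0 1, (iteratedDeriv j (periodize ρ) (x - T₁ y) -
        iteratedDeriv j (periodize ρ) (x - T₀ y)) * f y := by
  set g := fun i => iteratedDeriv i (periodize ρ)
  have hg_meas : ∀ i x (T : ℝ → ℝ), Measurable T → Measurable fun y => g i (x - T y) :=
    fun i x T hT =>
      (continuous_iteratedDeriv_periodize ρ i).measurable.comp (measurable_const.sub hT)
  have hg_int : ∀ x (T : ℝ → ℝ), Measurable T →
      IntegrableOn (fun y => periodize ρ (x - T y) * f y) (Ioc 0 1) := fun x T hT =>
    hf.bdd_mul (hg_meas 0 x T hT).aestronglyMeasurable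
      (ae_of_all _ fun y => le_ciSup (bddAbove_abs_iteratedDeriv_periodize ρ 0) (x - T y))
  have h_sub : (fun x => annealedOp ρ T₁ f x - annealedOp ρ T₀ f x) = fun x =>
      ∫ y in Ioc 0 1, (g 0 (x - T₁ y) - g 0 (x - T₀ y)) * f y := funext fun x => by
    simp only [annealedOp, g, iteratedDeriv_zero, sub_mul]
    exact (integral_sub (hg_int x T₁ hT₁) (hg_int x T₀ hT₀)).symm
  rw [h_sub]
  refine iteratedDeriv_integral_mul hf (fun i x => ((hg_meas i x T₁ hT₁).sub
    (hg_meas i x T₀ hT₀)).aestronglyMeasurable) (fun i => ?_) (fun i x y => ?_) j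
  · obtain ⟨C, hC⟩ := bddAbove_abs_iteratedDeriv_periodize ρ i
    exact ⟨C + C, fun x y => (abs_sub _ _).trans
      (add_le_add (hC ⟨x - T₁ y, rfl⟩) (hC ⟨x - T₀ y, rfl⟩))⟩
  · have h_comp : ∀ c : ℝ, HasDerivAt (fun x => g i (x - c)) (g (i + 1) (x - c)) x := fun c => by
      simpa using (hasDerivAt_iteratedDeriv_periodize ρ i (x - c)).comp_sub_const x c
    exact (h_comp (T₁ y)).sub (h_comp (T₀ y))

theorem stmt_12_general (k : ℕ) :
    ∃ C : ℝ, 0 ≤ C ∧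
      ∀ ρ : SchwartzMap ℝ ℝ,
        (∀ x, ρ (-x) = ρ x) → (∀ x, 0 ≤ ρ x) → (∫ x, ρ x) = 1 →
        ∀ T₀ T₁ : ℝ → ℝ,
          Continuous T₀ → Continuous T₁ →
          (∀ x, ∃ m : ℤ, T₀ (x + 1) = T₀ x + m) → (∀ x, ∃ m : ℤ, T₁ (x + 1) = T₁ x + m) →
          ∀ f : ℝ → ℝ, Function.Periodic f 1 → IntegrableOn f (Ioc (0:ℝ) 1) →
            ∀ j < k, ∀ x : ℝ,
              |iteratedDeriv j (fun z => annealedOp ρ T₁ f z - annealedOp ρ T₀ f z) x|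
                ≤ C * CkNorm k (periodize ρ)
                    * (⨆ y : ℝ, ‖((T₀ y : AddCircle (1:ℝ))) - ((T₁ y : AddCircle (1:ℝ)))‖)
                    * ∫ y in Ioc (0:ℝ) 1, |f y| := by
  refine ⟨1, zero_le_one, fun ρ _ _ _ T₀ T₁ hT₀ hT₁ _ _ f _ hf j hj x => ?_⟩
  set S := ⨆ x, |iteratedDeriv (j + 1) (periodize ρ) x|
  have h_dist := AddCircle.norm_le_iSup_norm one_ne_zero
    fun y => (T₀ y : AddCircle (1:ℝ)) - (T₁ y : AddCircle (1:ℝ))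
  have hS := le_ciSup (bddAbove_abs_iteratedDeriv_periodize ρ (j + 1))
  have h_kernel : ∀ y, |iteratedDeriv j (periodize ρ) (x - T₁ y) -
      iteratedDeriv j (periodize ρ) (x - T₀ y)| ≤
        S * ⨆ y : ℝ, ‖((T₀ y : AddCircle (1:ℝ))) - ((T₁ y : AddCircle (1:ℝ)))‖ := fun y =>
    (abs_sub_le_mul_norm_addCircle (hasDerivAt_iteratedDeriv_periodize ρ j)
      (periodic_iteratedDeriv_periodize ρ j) hS x (T₀ y) (T₁ y)).trans
    (mul_le_mul_of_nonneg_left (h_dist y) ((abs_nonneg _).trans (hS 0)))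
  rw [iteratedDeriv_annealedOp_sub ρ hT₀.measurable hT₁.measurable hf, one_mul]
  exact (abs_integral_mul_le_of_abs_le h_kernel hf).trans <|
    mul_le_mul_of_nonneg_right
      (mul_le_mul_of_nonneg_right (iSup_abs_iteratedDeriv_le_CkNorm hj _)
        ((norm_nonneg _).trans (h_dist 0)))
      (integral_nonneg fun y => abs_nonneg _)

/-- Lemma `laquattro` of the paper.  There is `C ≥ 0`, independent of
`ρ, T₀, T₁, f`, such that the annealed transfer operators `L₀, L₁` of two systems with the
same noise kernel `ρ` and continuous deterministic parts `T₀, T₁` satisfy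
`‖L₁ f − L₀ f‖_{C^{k−1}} ≤ C ‖ρ‖_{C^k} ‖T₀ − T₁‖_{C⁰} ‖f‖_{L¹}` for all `f ∈ L¹(𝕊¹)`,
where `‖T₀ − T₁‖_{C⁰} = sup_y d(T₀(y), T₁(y))` with `d` the circle distance. -/
theorem stmt_12 (k : ℕ) (hk : 1 ≤ k) :
    ∃ C : ℝ, 0 ≤ C ∧
      ∀ ρ : SchwartzMap ℝ ℝ,
        (∀ x, ρ (-x) = ρ x) → (∀ x, 0 ≤ ρ x) → (∫ x, ρ x) = 1 →
        ∀ T₀ T₁ : ℝ → ℝ,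
          Continuous T₀ → Continuous T₁ →
          (∀ x, ∃ m : ℤ, T₀ (x + 1) = T₀ x + m) → (∀ x, ∃ m : ℤ, T₁ (x + 1) = T₁ x + m) →
          ∀ f : ℝ → ℝ, Function.Periodic f 1 → IntegrableOn f (Ioc (0:ℝ) 1) →
            ∀ j < k, ∀ x : ℝ,
              |iteratedDeriv j (fun z => annealedOp ρ T₁ f z - annealedOp ρ T₀ f z) x|
                ≤ C * CkNorm k (periodize ρ)
                    * (⨆ y : ℝ, ‖((T₀ y : AddCircle (1:ℝ))) - ((T₁ y : AddCircle (1:ℝ)))‖)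
                    * ∫ y in Ioc (0:ℝ) 1, |f y| :=
  stmt_12_general k
end
end

section
/- For the self-consistent noisy tent-map system, there is C ≥ 0 such that for all probability densities μ₁, μ₂ ∈ L²([0,1]) and all δ ≥ 0 (small enough that 1 + δ∫t μ_i(t)dt > 0): ‖L_{δ,μ₂} − L_{δ,μ₁}‖_{L²→L²} ≤ δ C ‖μ₁ − μ₂‖_{L²} and ‖L_{0,μ₁} − L_{δ,μ₁}‖_{L²→L²} ≤ δ C ‖μ₁‖_{L²}. -/
noncomputable section
open MeasureTheory Set Filter

/-- Lebesgue measure restricted to `[0,1]`. -/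
def mI : Measure ℝ := volume.restrict (Icc (0:ℝ) 1)

/-- The tent map `T(x) = min (2x, 2 - 2x)`. -/
def tent (x : ℝ) : ℝ := min (2 * x) (2 - 2 * x)

/-- `∫₀¹ t μ(t) dt`. -/
def avg (μ : ℝ → ℝ) : ℝ := ∫ t in Icc (0:ℝ) 1, t * μ t

/-- The self-consistently perturbed tent map `T_{δ,μ}(x) = T(x)/(1 + δ∫ t μ(t) dt)`. -/
def tentSC (δ : ℝ) (μ : ℝ → ℝ) (x : ℝ) : ℝ := tent x / (1 + δ * avg μ)

/-- The reflecting-boundary noise kernel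
`k_{δ,μ}(x,y) = ρ(x − T_{δ,μ}(y)) + ρ(−x − T_{δ,μ}(y)) + ρ(2 − x − T_{δ,μ}(y))`. -/
def ker (ρ : ℝ → ℝ) (δ : ℝ) (μ : ℝ → ℝ) (x y : ℝ) : ℝ :=
  ρ (x - tentSC δ μ y) + ρ (-x - tentSC δ μ y) + ρ (2 - x - tentSC δ μ y)

/-- The annealed (kernel) transfer operator `(L_{δ,μ} f)(x) = ∫₀¹ k_{δ,μ}(x,y) f(y) dy`. -/
def Lop (ρ : ℝ → ℝ) (δ : ℝ) (μ : ℝ → ℝ) (f : ℝ → ℝ) (x : ℝ) : ℝ :=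
  ∫ y in Icc (0:ℝ) 1, ker ρ δ μ x y * f y

/-- A probability density in `L²([0,1])`. -/
def ProbDensity (μ : ℝ → ℝ) : Prop :=
  (∀ᵐ x ∂mI, 0 ≤ μ x) ∧ MemLp μ 2 mI ∧ (∫ x in Icc (0:ℝ) 1, μ x) = 1

/-! The kernel `k_{δ,μ}(x,y)` depends on `(δ, μ)` only through the shift `T_{δ,μ}(y)`, and
`|T_{δ₂,μ₂}(y) - T_{δ₁,μ₁}(y)| ≤ |δ₂∫tμ₂ - δ₁∫tμ₁|` since `0 ≤ T ≤ 1` and both denominators are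
at least `1`. As `ρ` is `L`-Lipschitz, the two kernels are uniformly within `3L` times that
number, so the difference of the operators maps `f` to a function bounded by
`3L |δ₂∫tμ₂ - δ₁∫tμ₁| ‖f‖_{L¹}`, and on the probability space `[0,1]` both the `L²` norm of
that function and `|∫ t g(t) dt| ≤ ‖g‖_{L¹}` are controlled by `L²` norms. -/

open scoped ENNReal NNReal

instance : IsProbabilityMeasure mI :=
  ⟨by simp [mI, Real.volume_Icc]⟩

lemma ae_mem_Icc_mI : ∀ᵐ y ∂mI, y ∈ Icc (0:ℝ) 1 :=
  ae_restrict_mem measurableSet_Icc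

lemma tent_mem_Icc {y : ℝ} (hy : y ∈ Icc (0:ℝ) 1) : tent y ∈ Icc (0:ℝ) 1 := by
  obtain ⟨h0, h1⟩ := hy
  refine ⟨le_min (by linarith) (by linarith), ?_⟩
  rcases le_total y (1/2) with h | h
  · exact (min_le_left _ _).trans (by linarith)
  · exact (min_le_right _ _).trans (by linarith)

lemma continuous_tentSC (δ : ℝ) (μ : ℝ → ℝ) : Continuous (tentSC δ μ) :=
  ((continuous_const.mul continuous_id).min
    (continuous_const.sub (continuous_const.mul continuous_id))).div_const _

lemma abs_div_one_add_sub_div_one_add_le {t a b : ℝ} (ht : |t| ≤ 1) (ha : 0 ≤ a) (hb : 0 ≤ b) :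
    |t / (1 + a) - t / (1 + b)| ≤ |a - b| := by
  have hden : 1 ≤ (1 + a) * (1 + b) := by nlinarith
  have heq : t / (1 + a) - t / (1 + b) = t * (b - a) / ((1 + a) * (1 + b)) := by
    field_simp
    ring
  rw [heq, abs_div, abs_mul, abs_of_pos (show (0:ℝ) < (1 + a) * (1 + b) by positivity),
    abs_sub_comm b]
  calc |t| * |a - b| / ((1 + a) * (1 + b)) ≤ |t| * |a - b| :=
        div_le_self (by positivity) hden
    _ ≤ |a - b| := mul_le_of_le_one_left (abs_nonneg _) ht

lemma abs_tentSC_sub_le {δ₁ δ₂ : ℝ} {μ₁ μ₂ : ℝ → ℝ} (h₁ : 0 ≤ δ₁ * avg μ₁)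
    (h₂ : 0 ≤ δ₂ * avg μ₂) {y : ℝ} (hy : y ∈ Icc (0:ℝ) 1) :
    |tentSC δ₂ μ₂ y - tentSC δ₁ μ₁ y| ≤ |δ₂ * avg μ₂ - δ₁ * avg μ₁| := by
  obtain ⟨h0, h1⟩ := tent_mem_Icc hy
  exact abs_div_one_add_sub_div_one_add_le (abs_le.mpr ⟨by linarith, h1⟩) h₂ h₁

section Kernel

variable {ρ : ℝ → ℝ} {K : ℝ≥0}

lemma LipschitzWith.abs_sub_comp_sub_le (hρ : LipschitzWith K ρ) (a s t : ℝ) :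
    |ρ (a - s) - ρ (a - t)| ≤ K * |s - t| := by
  have h := hρ.dist_le_mul (a - s) (a - t)
  rwa [Real.dist_eq, Real.dist_eq, sub_sub_sub_cancel_left, abs_sub_comm t] at h

lemma LipschitzWith.abs_ker_sub_le (hρ : LipschitzWith K ρ) (δ₁ δ₂ : ℝ) (μ₁ μ₂ : ℝ → ℝ)
    (x y : ℝ) :
    |ker ρ δ₂ μ₂ x y - ker ρ δ₁ μ₁ x y| ≤ 3 * K * |tentSC δ₂ μ₂ y - tentSC δ₁ μ₁ y| := by
  simp only [_root_.ker]
  set s := tentSC δ₂ μ₂ y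
  set t := tentSC δ₁ μ₁ y
  have e₁ := hρ.abs_sub_comp_sub_le x s t
  have e₂ := hρ.abs_sub_comp_sub_le (-x) s t
  have e₃ := hρ.abs_sub_comp_sub_le (2 - x) s t
  calc |ρ (x - s) + ρ (-x - s) + ρ (2 - x - s) - (ρ (x - t) + ρ (-x - t) + ρ (2 - x - t))|
      = |(ρ (x - s) - ρ (x - t)) + (ρ (-x - s) - ρ (-x - t))
          + (ρ (2 - x - s) - ρ (2 - x - t))| := by
        ring_nf
    _ ≤ _ := abs_add_three _ _ _
    _ ≤ 3 * K * |s - t| := by linarith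

lemma integrable_ker_mul (hρ : Continuous ρ) (δ : ℝ) (μ : ℝ → ℝ) (x : ℝ) {f : ℝ → ℝ}
    (hf : Integrable f mI) : Integrable (fun y => ker ρ δ μ x y * f y) mI := by
  have hk : Continuous fun y => ker ρ δ μ x y := by
    have hT := continuous_tentSC δ μ
    unfold _root_.ker
    fun_prop
  exact IntegrableOn.continuousOn_mul hk.continuousOn hf isCompact_Icc

lemma Lop_sub_Lop_eq_integral (hρ : Continuous ρ) (δ₁ δ₂ : ℝ) (μ₁ μ₂ : ℝ → ℝ) {f : ℝ → ℝ}
    (hf : Integrable f mI) (x : ℝ) :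
    Lop ρ δ₂ μ₂ f x - Lop ρ δ₁ μ₁ f x
      = ∫ y, (ker ρ δ₂ μ₂ x y - ker ρ δ₁ μ₁ x y) * f y ∂mI := by
  simp only [sub_mul]
  exact (integral_sub (integrable_ker_mul hρ δ₂ μ₂ x hf)
    (integrable_ker_mul hρ δ₁ μ₁ x hf)).symm

end Kernel

lemma enorm_integral_mul_le_of_ae_abs_le {α : Type*} [MeasurableSpace α] {ν : Measure α}
    {k f : α → ℝ} {M : ℝ} (hk : ∀ᵐ y ∂ν, |k y| ≤ M) :
    ‖∫ y, k y * f y ∂ν‖ₑ ≤ ENNReal.ofReal M * eLpNorm f 1 ν := by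
  rw [eLpNorm_one_eq_lintegral_enorm, ← lintegral_const_mul' _ _ ENNReal.ofReal_ne_top]
  refine (enorm_integral_le_lintegral_enorm _).trans (lintegral_mono_ae ?_)
  filter_upwards [hk] with y hy
  rw [enorm_mul, Real.enorm_eq_ofReal_abs (k y)]
  gcongr

lemma enorm_mul_avg_le {δ : ℝ} (hδ : 0 ≤ δ) {g : ℝ → ℝ} (hg : AEStronglyMeasurable g mI) :
    ‖δ * avg g‖ₑ ≤ ENNReal.ofReal δ * eLpNorm g 2 mI := by
  have hid : ∀ᵐ t ∂mI, |t| ≤ 1 := by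
    filter_upwards [ae_mem_Icc_mI] with t ht
    exact abs_le.mpr ⟨by linarith [ht.1], ht.2⟩
  have havg : ‖avg g‖ₑ ≤ eLpNorm g 2 mI := by
    calc ‖avg g‖ₑ ≤ ENNReal.ofReal 1 * eLpNorm g 1 mI :=
          enorm_integral_mul_le_of_ae_abs_le hid
      _ ≤ eLpNorm g 2 mI := by
          rw [ENNReal.ofReal_one, one_mul]
          exact eLpNorm_le_eLpNorm_of_exponent_le (by norm_num) hg
  rw [enorm_mul, Real.enorm_of_nonneg hδ]
  gcongr

lemma avg_nonneg {μ : ℝ → ℝ} (hμ : ∀ᵐ x ∂mI, 0 ≤ μ x) : 0 ≤ avg μ := by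
  apply integral_nonneg_of_ae
  filter_upwards [ae_mem_Icc_mI, hμ] with t ht hμt
  exact mul_nonneg ht.1 hμt

lemma avg_sub {μ₁ μ₂ : ℝ → ℝ} (h₁ : Integrable μ₁ mI) (h₂ : Integrable μ₂ mI) :
    avg (fun t => μ₁ t - μ₂ t) = avg μ₁ - avg μ₂ := by
  have hid : ContinuousOn (fun t : ℝ => t) (Icc 0 1) := continuousOn_id
  simp only [avg, mul_sub]
  exact integral_sub (IntegrableOn.continuousOn_mul hid h₁ isCompact_Icc)
    (IntegrableOn.continuousOn_mul hid h₂ isCompact_Icc)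

lemma eLpNorm_Lop_sub_le {ρ : ℝ → ℝ} {K : ℝ≥0} (hρ : LipschitzWith K ρ)
    {δ₁ δ₂ : ℝ} {μ₁ μ₂ : ℝ → ℝ} (h₁ : 0 ≤ δ₁ * avg μ₁) (h₂ : 0 ≤ δ₂ * avg μ₂)
    {f : ℝ → ℝ} (hf : MemLp f 2 mI) :
    eLpNorm (fun x => Lop ρ δ₂ μ₂ f x - Lop ρ δ₁ μ₁ f x) 2 mI
      ≤ ENNReal.ofReal (3 * K * |δ₂ * avg μ₂ - δ₁ * avg μ₁|) * eLpNorm f 2 mI := by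
  have hkernel : ∀ x, ∀ᵐ y ∂mI,
      |ker ρ δ₂ μ₂ x y - ker ρ δ₁ μ₁ x y| ≤ 3 * K * |δ₂ * avg μ₂ - δ₁ * avg μ₁| := by
    intro x
    filter_upwards [ae_mem_Icc_mI] with y hy
    exact (hρ.abs_ker_sub_le δ₁ δ₂ μ₁ μ₂ x y).trans
      (mul_le_mul_of_nonneg_left (abs_tentSC_sub_le h₁ h₂ hy) (by positivity))
  have hfi : Integrable f mI := hf.integrable (by norm_num)
  have hpointwise : ∀ x, ‖Lop ρ δ₂ μ₂ f x - Lop ρ δ₁ μ₁ f x‖ₑ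
      ≤ ENNReal.ofReal (3 * K * |δ₂ * avg μ₂ - δ₁ * avg μ₁|) * eLpNorm f 2 mI := by
    intro x
    rw [Lop_sub_Lop_eq_integral hρ.continuous δ₁ δ₂ μ₁ μ₂ hfi x]
    refine (enorm_integral_mul_le_of_ae_abs_le (hkernel x)).trans ?_
    gcongr
    exact eLpNorm_le_eLpNorm_of_exponent_le (by norm_num) hf.aestronglyMeasurable
  simpa using eLpNorm_le_of_ae_enorm_bound (μ := mI) (p := 2) (Eventually.of_forall hpointwise)

theorem stmt_16_general
    (ρ : ℝ → ℝ) (Lc : NNReal) (hρLip : LipschitzWith Lc ρ) :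
    ∃ C : ℝ, 0 ≤ C ∧
      ∀ δ : ℝ, 0 ≤ δ →
        ∀ μ₁ μ₂ : ℝ → ℝ, ProbDensity μ₁ → ProbDensity μ₂ →
          0 < 1 + δ * avg μ₁ → 0 < 1 + δ * avg μ₂ →
          ∀ f : ℝ → ℝ, MemLp f 2 mI →
            eLpNorm (fun x => Lop ρ δ μ₂ f x - Lop ρ δ μ₁ f x) 2 mI
              ≤ ENNReal.ofReal (δ * C) * eLpNorm (fun t => μ₁ t - μ₂ t) 2 mI
                  * eLpNorm f 2 mI ∧
            eLpNorm (fun x => Lop ρ 0 μ₁ f x - Lop ρ δ μ₁ f x) 2 mI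
              ≤ ENNReal.ofReal (δ * C) * eLpNorm μ₁ 2 mI * eLpNorm f 2 mI := by
  refine ⟨3 * Lc, by positivity, fun δ hδ μ₁ μ₂ hμ₁ hμ₂ _ _ f hf => ?_⟩
  obtain ⟨hμ₁pos, hμ₁L2, -⟩ := hμ₁
  obtain ⟨hμ₂pos, hμ₂L2, -⟩ := hμ₂
  have h₁ : 0 ≤ δ * avg μ₁ := mul_nonneg hδ (avg_nonneg hμ₁pos)
  have h₂ : 0 ≤ δ * avg μ₂ := mul_nonneg hδ (avg_nonneg hμ₂pos)
  have hscale : ∀ (c : ℝ) (N : ℝ≥0∞), ‖c‖ₑ ≤ ENNReal.ofReal δ * N →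
      ENNReal.ofReal (3 * Lc * |c|) * eLpNorm f 2 mI
        ≤ ENNReal.ofReal (δ * (3 * Lc)) * N * eLpNorm f 2 mI := by
    intro c N hc
    rw [ENNReal.ofReal_mul (by positivity), ← Real.enorm_eq_ofReal_abs,
      ENNReal.ofReal_mul hδ]
    calc ENNReal.ofReal (3 * Lc) * ‖c‖ₑ * eLpNorm f 2 mI
        ≤ ENNReal.ofReal (3 * Lc) * (ENNReal.ofReal δ * N) * eLpNorm f 2 mI := by gcongr
      _ = _ := by ring
  constructor
  · refine (eLpNorm_Lop_sub_le hρLip h₁ h₂ hf).trans (hscale _ _ ?_)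
    have hdiff : δ * avg μ₂ - δ * avg μ₁ = -(δ * avg fun t => μ₁ t - μ₂ t) := by
      rw [avg_sub (hμ₁L2.integrable (by norm_num)) (hμ₂L2.integrable (by norm_num))]
      ring
    rw [hdiff, enorm_neg]
    exact enorm_mul_avg_le hδ (hμ₁L2.sub hμ₂L2).aestronglyMeasurable
  · refine (eLpNorm_Lop_sub_le hρLip h₁ (by simp) hf).trans (hscale _ _ ?_)
    rw [zero_mul, zero_sub, enorm_neg]
    exact enorm_mul_avg_le hδ hμ₁L2.aestronglyMeasurable

/-- For the self-consistent noisy tent-map system there is `C ≥ 0` such that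
for all probability densities `μ₁, μ₂ ∈ L²([0,1])` and all `δ ≥ 0` (small enough that
`1 + δ∫ t μᵢ(t) dt > 0`):
`‖L_{δ,μ₂} − L_{δ,μ₁}‖_{L²→L²} ≤ δ C ‖μ₁ − μ₂‖_{L²}` and
`‖L_{0,μ₁} − L_{δ,μ₁}‖_{L²→L²} ≤ δ C ‖μ₁‖_{L²}`. -/
theorem stmt_16
    (ρ : ℝ → ℝ) (Lc : NNReal) (hρLip : LipschitzWith Lc ρ)
    (hρ0 : ∀ x, 0 ≤ ρ x) (hρint : (∫ x, ρ x) = 1)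
    (hρsupp : Function.support ρ ⊆ Icc (-1) 1) :
    ∃ C : ℝ, 0 ≤ C ∧
      ∀ δ : ℝ, 0 ≤ δ →
        ∀ μ₁ μ₂ : ℝ → ℝ, ProbDensity μ₁ → ProbDensity μ₂ →
          0 < 1 + δ * avg μ₁ → 0 < 1 + δ * avg μ₂ →
          ∀ f : ℝ → ℝ, MemLp f 2 mI →
            eLpNorm (fun x => Lop ρ δ μ₂ f x - Lop ρ δ μ₁ f x) 2 mI
              ≤ ENNReal.ofReal (δ * C) * eLpNorm (fun t => μ₁ t - μ₂ t) 2 mI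
                  * eLpNorm f 2 mI ∧
            eLpNorm (fun x => Lop ρ 0 μ₁ f x - Lop ρ δ μ₁ f x) 2 mI
              ≤ ENNReal.ofReal (δ * C) * eLpNorm μ₁ 2 mI * eLpNorm f 2 mI :=
  stmt_16_general ρ Lc hρLip
end
end
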